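/- arXiv:1803.00292 — 15 statements merged into one kernel-verified Lean document; each statement's English description precedes it below -/
import Mathlib

section
/- The maximal number of consecutive 1's in the Baum–Sweet sequence is 2: if b_n = b_{n+1} = 1 and n > 0, then n is odd, and hence there is no n with b_n = b_{n+1} = b_{n+2} = 1. -/
/-- The maximal number of consecutive `1`'s in the Baum–Sweet sequence is `2`:
if `b n = b (n+1) = 1` with `n > 0` then `n` is odd, and hence there is no `n`
with `b n = b (n+1) = b (n+2) = 1`. -/
theorem baumSweet_at_most_two_consecutive_ones
    (b : ℕ → ℕ) (h0 : b 0 = 1)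
    (h1 : ∀ n, b (2 * n + 1) = b n)
    (h2 : ∀ n, b (4 * n) = b n)
    (h3 : ∀ n, b (4 * n + 2) = 0) :
    (∀ n : ℕ, 0 < n → b n = 1 → b (n + 1) = 1 → Odd n) ∧
      ¬ ∃ n : ℕ, b n = 1 ∧ b (n + 1) = 1 ∧ b (n + 2) = 1 := by
  have key : ∀ n : ℕ, 0 < n → b n = 1 → b (n + 1) = 1 → Odd n := by
    intro n
    induction n using Nat.strong_induction_on with
    | _ n ih =>
      intro hn hbn hbn1
      rcases Nat.even_or_odd n with he | ho
      · exfalso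
        obtain ⟨m, hm⟩ := he
        rcases Nat.even_or_odd m with ⟨k, hk⟩ | ⟨k, hk⟩
        · -- n = 4k
          have hn4 : n = 4 * k := by omega
          have hk0 : 0 < k := by omega
          have e1 : b (2 * k) = 1 := by
            have := h1 (2 * k)
            rw [show 2 * (2 * k) + 1 = n + 1 by omega] at this
            omega
          have e2 : b (2 * k + 1) = 1 := by
            have ha := h1 k
            have h4 := h2 k
            rw [← hn4] at h4
            omega
          have hodd := ih (2 * k) (by omega) (by omega) e1 e2
          rw [Nat.odd_iff] at hodd
          omega
        · -- n = 4k+2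
          have := h3 k
          rw [show 4 * k + 2 = n by omega] at this
          omega
      · exact ho
  refine ⟨key, ?_⟩
  rintro ⟨n, hb0, hb1, hb2⟩
  rcases Nat.eq_zero_or_pos n with rfl | hn
  · have := h3 0
    norm_num at this hb2
    omega
  · have o1 := key n hn hb0 hb1
    have o2 := key (n + 1) (by omega) hb1 hb2
    rw [Nat.odd_iff] at o1 o2
    omega
end

section
/- For n > 0, b_n = b_{n+1} = 1 if and only if n has the form n = 4^m - 1 for some m ≥ 1. -/
/-- For `n > 0`, `b n = b (n+1) = 1` iff `n = 4^m - 1` for some `m ≥ 1`. -/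
theorem baumSweet_two_consecutive_ones_iff
    (b : ℕ → ℕ) (h0 : b 0 = 1)
    (h1 : ∀ n, b (2 * n + 1) = b n)
    (h2 : ∀ n, b (4 * n) = b n)
    (h3 : ∀ n, b (4 * n + 2) = 0) :
    ∀ n : ℕ, 0 < n → (b n = 1 ∧ b (n + 1) = 1 ↔ ∃ m : ℕ, 1 ≤ m ∧ n = 4 ^ m - 1) := by
  -- Lemma A: no two consecutive ones starting at a positive even index
  have A : ∀ n : ℕ, 0 < n → Even n → ¬(b n = 1 ∧ b (n + 1) = 1) := by
    intro n
    induction n using Nat.strong_induction_on with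
    | _ n IH =>
      intro hpos hev ⟨hbn, hbn1⟩
      obtain ⟨k, hk⟩ := hev
      rcases Nat.even_or_odd k with ⟨j, hj⟩ | ⟨j, hj⟩
      · -- n = 4j, j ≥ 1
        have hn4 : n = 4 * j := by omega
        have hj1 : 1 ≤ j := by omega
        have hbj : b j = 1 := by rw [hn4, h2] at hbn; exact hbn
        have hb2j : b (2 * j) = 1 := by
          have e : n + 1 = 2 * (2 * j) + 1 := by omega
          rw [e, h1] at hbn1; exact hbn1
        have hb2j1 : b (2 * j + 1) = 1 := by rw [h1]; exact hbj
        exact IH (2 * j) (by omega) (by omega) ⟨j, by omega⟩ ⟨hb2j, hb2j1⟩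
      · -- n = 4j + 2
        have e : n = 4 * j + 2 := by omega
        rw [e, h3] at hbn
        exact absurd hbn (by omega)
  intro n
  induction n using Nat.strong_induction_on with
  | _ n IH =>
    intro hpos
    rcases Nat.even_or_odd n with hev | ⟨k, hk⟩
    · -- n even: both sides false
      constructor
      · intro h; exact absurd h (A n hpos hev)
      · rintro ⟨m, hm, hnm⟩
        exfalso
        obtain ⟨t, ht⟩ : ∃ t, 4 ^ m = 4 * t := ⟨4 ^ (m - 1), by
          rw [mul_comm, ← pow_succ, Nat.sub_add_cancel hm]⟩
        obtain ⟨k, hk⟩ := hev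
        omega
    · -- n = 2k + 1
      have hbn : b n = b k := by rw [hk]; exact h1 k
      rcases Nat.even_or_odd k with ⟨j, hj⟩ | ⟨j, hj⟩
      · -- n = 4j + 1: both sides false
        have e : n + 1 = 4 * j + 2 := by omega
        constructor
        · rintro ⟨-, hbn1⟩
          rw [e, h3] at hbn1; exact absurd hbn1 (by omega)
        · rintro ⟨m, hm, hnm⟩
          exfalso
          obtain ⟨t, ht⟩ : ∃ t, 4 ^ m = 4 * t := ⟨4 ^ (m - 1), by
            rw [mul_comm, ← pow_succ, Nat.sub_add_cancel hm]⟩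
          omega
      · -- n = 4j + 3
        have hbk : b k = b j := by rw [hj]; exact h1 j
        have hbn1 : b (n + 1) = b (j + 1) := by
          have e : n + 1 = 4 * (j + 1) := by omega
          rw [e, h2]
        rcases Nat.eq_zero_or_pos j with hj0 | hjpos
        · subst hj0
          have hn3 : n = 3 := by omega
          constructor
          · intro _; exact ⟨1, le_refl 1, by omega⟩
          · intro _
            refine ⟨by rw [hbn, hbk]; exact h0, ?_⟩
            rw [hbn1]
            have := h1 0
            simpa [h0] using this
        · have hIH := IH j (by omega) hjpos
          constructor
          · rintro ⟨hb1, hb2⟩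
            obtain ⟨m, hm, hjm⟩ := hIH.mp ⟨by rw [← hbk, ← hbn]; exact hb1,
              by rw [← hbn1]; exact hb2⟩
            refine ⟨m + 1, by omega, ?_⟩
            have h4 : 4 ≤ 4 ^ m := by
              calc 4 = 4 ^ 1 := by norm_num
              _ ≤ 4 ^ m := Nat.pow_le_pow_right (by norm_num) hm
            have hsucc : 4 ^ (m + 1) = 4 * 4 ^ m := by rw [pow_succ]; ring
            omega
          · rintro ⟨M, hM, hnM⟩
            have hM2 : 2 ≤ M := by
              by_contra hc
              have : M = 1 := by omega
              subst this
              simp at hnM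
              omega
            have h4 : 4 ≤ 4 ^ (M - 1) := by
              calc 4 = 4 ^ 1 := by norm_num
              _ ≤ 4 ^ (M - 1) := Nat.pow_le_pow_right (by norm_num) (by omega)
            have hsucc : 4 ^ M = 4 * 4 ^ (M - 1) := by
              rw [mul_comm, ← pow_succ, Nat.sub_add_cancel (by omega : 1 ≤ M)]
            have hjval : j = 4 ^ (M - 1) - 1 := by omega
            obtain ⟨hb1, hb2⟩ := hIH.mpr ⟨M - 1, by omega, hjval⟩
            exact ⟨by rw [hbn, hbk]; exact hb1, by rw [hbn1]; exact hb2⟩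
end

section
/- Let Λ_0 = 1, Λ_1 = 01, and Λ_n = Λ_{n-2}Λ_{n-1} for n ≥ 2 (words over {0,1}). Then for all n ∈ ℕ, 1·Λ_{n+1} = φ'(Λ_n)·1, where φ' is the monoid morphism on {0,1}* with φ'(0) = 1 and φ'(1) = 10. -/
/-- The morphism `φ'` on words over `{0,1}` (with `false = 0`, `true = 1`)
determined by `φ'(0) = 1` and `φ'(1) = 10`. -/
def phiPrime (w : List Bool) : List Bool :=
  w.flatMap fun x => if x then [true, false] else [true]

/-- `Λ_0 = 1`, `Λ_1 = 01`, `Λ_n = Λ_{n-2} Λ_{n-1}`. -/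
def Lam : ℕ → List Bool
  | 0 => [true]
  | 1 => [false, true]
  | n + 2 => Lam n ++ Lam (n + 1)

lemma phiPrime_append (a b : List Bool) :
    phiPrime (a ++ b) = phiPrime a ++ phiPrime b := by
  simp [phiPrime]

/-- For all `n`, `1·Λ_{n+1} = φ'(Λ_n)·1`. -/
theorem one_cons_Lam_succ_eq_phiPrime_Lam_append_one :
    ∀ n : ℕ, [true] ++ Lam (n + 1) = phiPrime (Lam n) ++ [true] := by
  intro n
  induction n using Nat.strong_induction_on with
  | _ n ih =>
    match n with
    | 0 => rfl
    | 1 => rfl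
    | n + 2 =>
      have h1 := ih n (by omega)
      have h2 := ih (n + 1) (by omega)
      show [true] ++ (Lam (n + 1) ++ Lam (n + 2)) = phiPrime (Lam n ++ Lam (n + 1)) ++ [true]
      simp only [phiPrime_append, List.append_assoc]
      rw [← h2, ← List.append_assoc (phiPrime (Lam n)), ← h1, List.append_assoc]
end

section
/- Let (l_n) be the increasing enumeration of {m ∈ ℕ : b_m = 1}, where (b_n) is the Baum–Sweet sequence, and let (φ_n) be the infinite Fibonacci word. Then l_0 ≡ 0 (mod 2), l_1 ≡ 1 (mod 2), and l_n ≡ 1 - φ_{n-2} (mod 2) for n ≥ 2. -/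
/-- The Fibonacci morphism `0 ↦ 01`, `1 ↦ 0` (with `false = 0`, `true = 1`). -/
def phiFib (w : List Bool) : List Bool :=
  w.flatMap fun x => if x then [false] else [false, true]

/-- Prefixes of the infinite Fibonacci word: `F_0 = 0`, `F_{n+1} = φ(F_n)`. -/
def fibPrefix : ℕ → List Bool
  | 0 => [false]
  | n + 1 => phiFib (fibPrefix n)

/-- The `n`-th letter `φ_n` of the infinite Fibonacci word, as `0` or `1` in `ℕ`. -/
def fibLetter (n : ℕ) : ℕ := ((fibPrefix (n + 1)).getD n false).toNat

/-!
The ones of `b` in `[2^(k+2), 2^(k+3))` arise from those in `[2^(k+1), 2^(k+2))`: every one `y`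
gives the one `2y + 1`, and an odd one `y = 2j + 1` also gives `4j = 2y - 2`, because
`b (4j) = b j = b (2j + 1)`. So the increasing list `T_k = ones b k` of the ones in
`[3, 2^(k+2))` satisfies `T_{k+1} = 3 :: T_k.flatMap children`; the order is preserved because
`2j` and `2j + 1` are never both ones for `j > 0`. Recording parities with `true` for even,
`children` acts on parity words as the morphism `σ : 1 ↦ 0, 0 ↦ 10`, which is conjugate to the
Fibonacci morphism `φ` through `φ(w) 0 = 0 σ(w)`. By induction the parity word of `T_k` is
`φ^(k+2)(0)` minus its last two letters.
-/

theorem StrictMono.apply_eq_getElem_of_mem_iff {l : ℕ → ℕ} (hl : StrictMono l) {L : List ℕ}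
    (hL : L.SortedLT) {B : ℕ} (hmem : ∀ m, m ∈ L ↔ m ∈ Set.range l ∧ m < B)
    {i : ℕ} (hi : i < L.length) : l i = L[i] := by
  classical
  have hex : ∃ n, B ≤ l n := ⟨B, hl.id_le B⟩
  have hlt (j : ℕ) : l j < B ↔ j < Nat.find hex :=
    ⟨fun h => lt_of_not_ge fun hj => (Nat.find_spec hex).not_gt ((hl.monotone hj).trans_lt h),
      fun h => lt_of_not_ge (Nat.find_min hex h)⟩
  have hL' : L = (List.range (Nat.find hex)).map l := by
    refine hL.eq_of_mem_iff (List.pairwise_map.2 ?_).sortedLT fun m => ?_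
    · exact List.pairwise_lt_range.imp fun h => hl h
    · simp only [hmem, List.mem_map, List.mem_range, Set.mem_range]
      constructor
      · rintro ⟨⟨j, rfl⟩, hj⟩
        exact ⟨j, (hlt j).1 hj, rfl⟩
      · rintro ⟨j, hj, rfl⟩
        exact ⟨⟨j, rfl⟩, (hlt j).2 hj⟩
  subst hL'
  simp

theorem phiFib_append (u v : List Bool) : phiFib (u ++ v) = phiFib u ++ phiFib v :=
  List.flatMap_append

theorem phiFib_pair (a : Bool) : phiFib [a, !a] = [false, !a, a] := by
  cases a <;> rfl

def phiFibConj (w : List Bool) : List Bool :=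
  w.flatMap fun x => if x then [false] else [true, false]

theorem phiFib_append_false (w : List Bool) : phiFib w ++ [false] = false :: phiFibConj w := by
  induction w with
  | nil => rfl
  | cons a w ih => cases a <;> simp_all [phiFib, phiFibConj]

theorem fibPrefix_add_two (n : ℕ) : fibPrefix (n + 2) = fibPrefix (n + 1) ++ fibPrefix n := by
  induction n with
  | zero => rfl
  | succ n ih =>
    show phiFib (fibPrefix (n + 2)) = phiFib (fibPrefix (n + 1)) ++ fibPrefix (n + 1)
    rw [ih, phiFib_append]
    rfl

theorem le_length_fibPrefix : ∀ n, n + 1 ≤ (fibPrefix n).length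
  | 0 => by simp [fibPrefix]
  | 1 => by simp [fibPrefix, phiFib]
  | n + 2 => by
    have := le_length_fibPrefix n
    have := le_length_fibPrefix (n + 1)
    rw [fibPrefix_add_two, List.length_append]
    omega

theorem fibLetter_eq_getD (n : ℕ) : fibLetter n = ((fibPrefix (n + 2)).getD n false).toNat := by
  rw [fibLetter, fibPrefix_add_two, List.getD_append]
  have := le_length_fibPrefix (n + 1)
  omega

namespace BaumSweet

def children (y : ℕ) : List ℕ := if y % 2 = 1 then [2 * y - 2, 2 * y + 1] else [2 * y + 1]

theorem mem_children {x y : ℕ} :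
    x ∈ children y ↔ x = 2 * y + 1 ∨ y % 2 = 1 ∧ x = 2 * y - 2 := by
  unfold children
  split_ifs with hy <;> simp [hy, or_comm]

theorem map_flatMap_children (L : List ℕ) :
    (L.flatMap children).map (fun m => decide (m % 2 = 0)) =
      phiFibConj (L.map fun m => decide (m % 2 = 0)) := by
  rw [List.map_flatMap, phiFibConj, List.flatMap_map]
  congr 1
  funext y
  unfold children
  split_ifs <;> simp_all
  omega

def ones (b : ℕ → ℕ) (k : ℕ) : List ℕ :=
  (List.range (4 * 2 ^ k)).filter fun m => 3 ≤ m ∧ b m = 1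

variable {b : ℕ → ℕ}

theorem apply_one (h0 : b 0 = 1) (h1 : ∀ n, b (2 * n + 1) = b n) : b 1 = 1 := by
  simpa [h0] using h1 0

theorem apply_three (h0 : b 0 = 1) (h1 : ∀ n, b (2 * n + 1) = b n) : b 3 = 1 := by
  simpa [apply_one h0 h1] using h1 1

theorem apply_two_mul_ne_one (h2 : ∀ n, b (4 * n) = b n) (h3 : ∀ n, b (4 * n + 2) = 0)
    {j : ℕ} (hj : 0 < j) (hbj : b j = 1) : b (2 * j) ≠ 1 := by
  induction j using Nat.strong_induction_on with
  | _ j ih =>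
    obtain ⟨i, rfl | rfl⟩ := Nat.even_or_odd' j
    · rw [show 2 * (2 * i) = 4 * i by ring, h2]
      exact fun hbi => ih i (by omega) (by omega) hbi hbj
    · rw [show 2 * (2 * i + 1) = 4 * i + 2 by ring, h3]
      exact zero_ne_one

theorem mem_ones {k m : ℕ} : m ∈ ones b k ↔ 3 ≤ m ∧ m < 4 * 2 ^ k ∧ b m = 1 := by
  simp [ones]
  tauto

theorem sortedLT_ones (k : ℕ) : (ones b k).SortedLT :=
  (List.pairwise_lt_range.filter _).sortedLT

theorem ones_zero (h0 : b 0 = 1) (h1 : ∀ n, b (2 * n + 1) = b n) : ones b 0 = [3] := by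
  simp [ones, List.range_succ, apply_three h0 h1]

theorem mem_flatMap_children_ones (h1 : ∀ n, b (2 * n + 1) = b n)
    (h2 : ∀ n, b (4 * n) = b n) (h3 : ∀ n, b (4 * n + 2) = 0) {k m : ℕ} :
    m ∈ (ones b k).flatMap children ↔ 4 ≤ m ∧ m < 8 * 2 ^ k ∧ b m = 1 := by
  simp only [List.mem_flatMap, mem_ones, mem_children]
  constructor
  · rintro ⟨y, ⟨hy3, hyk, hby⟩, rfl | ⟨hy, rfl⟩⟩
    · exact ⟨by omega, by omega, by rw [h1, hby]⟩
    · obtain ⟨j, rfl⟩ : ∃ j, y = 2 * j + 1 := ⟨y / 2, by omega⟩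
      refine ⟨by omega, by omega, ?_⟩
      rw [show 2 * (2 * j + 1) - 2 = 4 * j by omega, h2, ← h1, hby]
  · rintro ⟨hm4, hmk, hbm⟩
    obtain ⟨y, rfl | rfl⟩ := Nat.even_or_odd' m
    · obtain ⟨j, rfl | rfl⟩ := Nat.even_or_odd' y
      · refine ⟨2 * j + 1, ⟨by omega, by omega, ?_⟩, Or.inr ⟨by omega, by omega⟩⟩
        rwa [h1, ← h2, show 4 * j = 2 * (2 * j) by ring]
      · rw [show 2 * (2 * j + 1) = 4 * j + 2 by ring, h3] at hbm
        exact absurd hbm zero_ne_one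
    · have hy2 : y ≠ 2 := by
        rintro rfl
        rw [h1, show 2 = 4 * 0 + 2 by rfl, h3] at hbm
        exact zero_ne_one hbm
      exact ⟨y, ⟨by omega, by omega, by rwa [← h1]⟩, Or.inl rfl⟩

theorem sortedLT_flatMap_children_ones (h1 : ∀ n, b (2 * n + 1) = b n)
    (h2 : ∀ n, b (4 * n) = b n) (h3 : ∀ n, b (4 * n + 2) = 0) (k : ℕ) :
    ((ones b k).flatMap children).SortedLT := by
  refine List.Pairwise.sortedLT <|
    List.pairwise_flatMap.2 ⟨fun y _ => ?_, (sortedLT_ones k).pairwise.imp_of_mem ?_⟩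
  · unfold children
    split_ifs <;> simp
  · intro y y' hy hy' hyy' x hx x' hx'
    -- only `y' = y + 1` with `y'` odd could put `2 * y' - 2 ∈ children y'` below `2 * y + 1`
    have hgap : y' % 2 = 1 → y + 2 ≤ y' := by
      intro hodd
      by_contra! hclose
      obtain ⟨j, rfl⟩ : ∃ j, y = 2 * j := ⟨y / 2, by omega⟩
      have hbj : b j = 1 := by
        rw [← h1, show 2 * j + 1 = y' by omega]
        exact (mem_ones.1 hy').2.2
      exact apply_two_mul_ne_one h2 h3 (by have := (mem_ones.1 hy).1; omega) hbj
        (mem_ones.1 hy).2.2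
    rw [mem_children] at hx hx'
    omega

theorem ones_succ (h0 : b 0 = 1) (h1 : ∀ n, b (2 * n + 1) = b n)
    (h2 : ∀ n, b (4 * n) = b n) (h3 : ∀ n, b (4 * n + 2) = 0) (k : ℕ) :
    ones b (k + 1) = 3 :: (ones b k).flatMap children := by
  refine (sortedLT_ones _).eq_of_mem_iff ?_ fun m => ?_
  · refine List.Pairwise.sortedLT <| List.pairwise_cons.2
      ⟨fun m hm => ?_, (sortedLT_flatMap_children_ones h1 h2 h3 k).pairwise⟩
    have := (mem_flatMap_children_ones h1 h2 h3).1 hm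
    omega
  · rw [List.mem_cons, mem_flatMap_children_ones h1 h2 h3, mem_ones, pow_succ]
    constructor
    · rintro ⟨hm3, hmk, hbm⟩
      by_cases hm : m = 3
      · exact Or.inl hm
      · exact Or.inr ⟨by omega, by omega, hbm⟩
    · rintro (rfl | ⟨hm4, hmk, hbm⟩)
      · exact ⟨le_rfl, by have := Nat.one_le_two_pow (n := k); omega, apply_three h0 h1⟩
      · exact ⟨by omega, by omega, hbm⟩

theorem fibPrefix_eq_map_ones_append (h0 : b 0 = 1) (h1 : ∀ n, b (2 * n + 1) = b n)
    (h2 : ∀ n, b (4 * n) = b n) (h3 : ∀ n, b (4 * n + 2) = 0) (k : ℕ) :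
    ∃ a, fibPrefix (k + 2) = (ones b k).map (fun m => decide (m % 2 = 0)) ++ [a, !a] := by
  induction k with
  | zero => exact ⟨true, by rw [ones_zero h0 h1]; rfl⟩
  | succ k ih =>
    obtain ⟨a, ha⟩ := ih
    have hmap : (ones b (k + 1)).map (fun m => decide (m % 2 = 0)) =
        phiFib ((ones b k).map fun m => decide (m % 2 = 0)) ++ [false] := by
      rw [ones_succ h0 h1 h2 h3, List.map_cons, map_flatMap_children, phiFib_append_false]
      rfl
    refine ⟨!a, ?_⟩
    rw [fibPrefix, ha, phiFib_append, phiFib_pair, hmap, Bool.not_not]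
    simp

theorem mem_zero_one_cons_ones (h0 : b 0 = 1) (h1 : ∀ n, b (2 * n + 1) = b n)
    (h3 : ∀ n, b (4 * n + 2) = 0) {k m : ℕ} :
    m ∈ 0 :: 1 :: ones b k ↔ b m = 1 ∧ m < 4 * 2 ^ k := by
  have hk := Nat.one_le_two_pow (n := k)
  simp only [List.mem_cons, mem_ones]
  constructor
  · rintro (rfl | rfl | ⟨-, hmk, hbm⟩)
    · exact ⟨h0, by omega⟩
    · exact ⟨apply_one h0 h1, by omega⟩
    · exact ⟨hbm, hmk⟩
  · rintro ⟨hbm, hmk⟩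
    have hm2 : m ≠ 2 := by
      rintro rfl
      rw [show 2 = 4 * 0 + 2 by rfl, h3] at hbm
      exact zero_ne_one hbm
    omega

theorem sortedLT_zero_one_cons_ones (k : ℕ) : (0 :: 1 :: ones b k).SortedLT := by
  refine List.Pairwise.sortedLT <| List.pairwise_cons.2 ⟨?_, List.pairwise_cons.2
    ⟨fun m hm => ?_, (sortedLT_ones k).pairwise⟩⟩
  · simp only [List.mem_cons]
    rintro m (rfl | hm)
    · exact one_pos
    · have := (mem_ones.1 hm).1
      omega
  · have := (mem_ones.1 hm).1
    omega

end BaumSweet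

/-- If `(l n)` is the increasing enumeration of `{m : b m = 1}` for the Baum–Sweet
sequence `b`, then `l 0 ≡ 0`, `l 1 ≡ 1`, and `l n ≡ 1 - φ_{n-2} (mod 2)` for `n ≥ 2`. -/
theorem baumSweet_ones_enumeration_mod_two
    (b : ℕ → ℕ) (h0 : b 0 = 1)
    (h1 : ∀ n, b (2 * n + 1) = b n)
    (h2 : ∀ n, b (4 * n) = b n)
    (h3 : ∀ n, b (4 * n + 2) = 0)
    (l : ℕ → ℕ) (hmono : StrictMono l)
    (hrange : ∀ m : ℕ, b m = 1 ↔ m ∈ Set.range l) :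
    l 0 % 2 = 0 ∧ l 1 % 2 = 1 ∧ ∀ n ≥ 2, l n % 2 = 1 - fibLetter (n - 2) := by
  have henum (k i : ℕ) (hi : i < (0 :: 1 :: BaumSweet.ones b k).length) :
      l i = (0 :: 1 :: BaumSweet.ones b k)[i] :=
    hmono.apply_eq_getElem_of_mem_iff (BaumSweet.sortedLT_zero_one_cons_ones k)
      (fun m => by rw [← hrange, BaumSweet.mem_zero_one_cons_ones h0 h1 h3]) hi
  have hl0 : l 0 = 0 := henum 0 0 (by simp)
  have hl1 : l 1 = 1 := henum 0 1 (by simp)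
  refine ⟨by rw [hl0], by rw [hl1], fun n hn => ?_⟩
  obtain ⟨i, rfl⟩ := Nat.exists_eq_add_of_le' hn
  obtain ⟨a, ha⟩ := BaumSweet.fibPrefix_eq_map_ones_append h0 h1 h2 h3 i
  have hi : i < (BaumSweet.ones b i).length := by
    have hlen := congrArg List.length ha
    have := le_length_fibPrefix (i + 2)
    simp only [List.length_append, List.length_map, List.length_cons, List.length_nil] at hlen
    omega
  rw [Nat.add_sub_cancel, fibLetter_eq_getD, ha, List.getD_append _ _ _ _ (by simpa using hi),
    List.getD_eq_getElem _ _ (by simpa using hi), List.getElem_map,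
    henum i (i + 2) (by simpa using hi)]
  rcases Nat.mod_two_eq_zero_or_one (BaumSweet.ones b i)[i] with h | h <;> simp [h]
end

section
/- For k ≥ 2, the set L_k = {m : 2^k ≤ m < 2^{k+1}, b_m = 1} satisfies L_k = (L_{k-2} + (2^k - 2^{k-2})) ∪ (L_{k-1} + 2^k), where (b_n) is the Baum–Sweet sequence. -/
private lemma pow2_succ (i : ℕ) : (2:ℕ)^(i+1) = 2 * 2^i := by
  rw [pow_succ]; ring

/-- prefix "1 0 0 (binary of t)": b (2^(j+2) + t) = b (2^j + t) for t < 2^j -/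
private lemma lemA (b : ℕ → ℕ)
    (h1 : ∀ n, b (2 * n + 1) = b n) (h2 : ∀ n, b (4 * n) = b n)
    (h3 : ∀ n, b (4 * n + 2) = 0) :
    ∀ j, ∀ t, t < 2^j → b (2^(j+2) + t) = b (2^j + t) := by
  intro j
  induction j using Nat.strong_induction_on with
  | _ j ih =>
  match j with
  | 0 =>
    intro t ht
    interval_cases t
    have := h2 1
    norm_num at this ⊢
    exact this
  | 1 =>
    intro t ht
    interval_cases t
    · have := h2 2; norm_num at this ⊢; exact this
    · have e1 : b 9 = b 4 := by have := h1 4; norm_num at this; exact this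
      have e2 : b 4 = b 1 := by have := h2 1; norm_num at this; exact this
      have e3 : b 3 = b 1 := by have := h1 1; norm_num at this; exact this
      norm_num
      rw [e1, e2, e3]
  | (j+2) =>
    intro t ht
    have q1 : (2:ℕ)^(j+1) = 2 * 2^j := pow2_succ j
    have q2 : (2:ℕ)^(j+2) = 2 * 2^(j+1) := pow2_succ (j+1)
    have q3 : (2:ℕ)^(j+3) = 2 * 2^(j+2) := pow2_succ (j+2)
    have q4 : (2:ℕ)^(j+4) = 2 * 2^(j+3) := pow2_succ (j+3)
    show b (2^(j+4) + t) = b (2^(j+2) + t)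
    rcases Nat.even_or_odd t with ⟨s, hs⟩ | ⟨s, hs⟩
    · rcases Nat.even_or_odd s with ⟨r, hr⟩ | ⟨r, hr⟩
      · -- t = 4r
        rw [show 2^(j+4) + t = 4 * (2^(j+2) + r) by omega, h2,
            show 2^(j+2) + t = 4 * (2^j + r) by omega, h2]
        exact ih j (by omega) r (by omega)
      · -- t = 4r + 2
        rw [show 2^(j+4) + t = 4 * (2^(j+2) + r) + 2 by omega, h3,
            show 2^(j+2) + t = 4 * (2^j + r) + 2 by omega, h3]
    · -- t = 2s + 1
      rw [show 2^(j+4) + t = 2 * (2^(j+3) + s) + 1 by omega, h1,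
          show 2^(j+2) + t = 2 * (2^(j+1) + s) + 1 by omega, h1]
      exact ih (j+1) (by omega) s (by omega)

/-- prefix "1 1 (binary of u)": b (2^(j+1) + 2^j + u) = b (2^j + u) for u < 2^j -/
private lemma lemB (b : ℕ → ℕ)
    (h1 : ∀ n, b (2 * n + 1) = b n) (h2 : ∀ n, b (4 * n) = b n)
    (h3 : ∀ n, b (4 * n + 2) = 0) :
    ∀ j, ∀ u, u < 2^j → b (2^(j+1) + 2^j + u) = b (2^j + u) := by
  intro j
  induction j using Nat.strong_induction_on with
  | _ j ih =>
  match j with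
  | 0 =>
    intro u hu
    interval_cases u
    have := h1 1
    norm_num at this ⊢
    exact this
  | 1 =>
    intro u hu
    interval_cases u
    · have e1 : b 6 = 0 := by have := h3 1; norm_num at this; exact this
      have e2 : b 2 = 0 := by have := h3 0; norm_num at this; exact this
      norm_num
      rw [e1, e2]
    · have e1 : b 7 = b 3 := by have := h1 3; norm_num at this; exact this
      norm_num
      rw [e1]
  | (j+2) =>
    intro u hu
    have q1 : (2:ℕ)^(j+1) = 2 * 2^j := pow2_succ j
    have q2 : (2:ℕ)^(j+2) = 2 * 2^(j+1) := pow2_succ (j+1)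
    have q3 : (2:ℕ)^(j+3) = 2 * 2^(j+2) := pow2_succ (j+2)
    show b (2^(j+3) + 2^(j+2) + u) = b (2^(j+2) + u)
    rcases Nat.even_or_odd u with ⟨r, hrr⟩ | ⟨s, hs⟩
    · rcases Nat.even_or_odd r with ⟨r', hr'⟩ | ⟨r', hr'⟩
      · -- u = 4r'
        rw [show 2^(j+3) + 2^(j+2) + u = 4 * (2^(j+1) + 2^j + r') by omega, h2,
            show 2^(j+2) + u = 4 * (2^j + r') by omega, h2]
        exact ih j (by omega) r' (by omega)
      · -- u = 4r' + 2
        rw [show 2^(j+3) + 2^(j+2) + u = 4 * (2^(j+1) + 2^j + r') + 2 by omega, h3,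
            show 2^(j+2) + u = 4 * (2^j + r') + 2 by omega, h3]
    · -- u = 2s + 1
      rw [show 2^(j+3) + 2^(j+2) + u = 2 * (2^(j+2) + 2^(j+1) + s) + 1 by omega, h1,
          show 2^(j+2) + u = 2 * (2^(j+1) + s) + 1 by omega, h1]
      exact ih (j+1) (by omega) s (by omega)

/-- prefix "1 0 1 (binary of u)": b (2^(j+2) + 2^j + u) = 0 for u < 2^j -/
private lemma lemC (b : ℕ → ℕ)
    (h1 : ∀ n, b (2 * n + 1) = b n) (h2 : ∀ n, b (4 * n) = b n)
    (h3 : ∀ n, b (4 * n + 2) = 0) :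
    ∀ j, ∀ u, u < 2^j → b (2^(j+2) + 2^j + u) = 0 := by
  intro j
  induction j using Nat.strong_induction_on with
  | _ j ih =>
  match j with
  | 0 =>
    intro u hu
    interval_cases u
    have e1 : b 5 = b 2 := by have := h1 2; norm_num at this; exact this
    have e2 : b 2 = 0 := by have := h3 0; norm_num at this; exact this
    norm_num
    rw [e1, e2]
  | 1 =>
    intro u hu
    interval_cases u
    · have := h3 2; norm_num at this ⊢; exact this
    · have e1 : b 11 = b 5 := by have := h1 5; norm_num at this; exact this
      have e2 : b 5 = b 2 := by have := h1 2; norm_num at this; exact this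
      have e3 : b 2 = 0 := by have := h3 0; norm_num at this; exact this
      norm_num
      rw [e1, e2, e3]
  | (j+2) =>
    intro u hu
    have q1 : (2:ℕ)^(j+1) = 2 * 2^j := pow2_succ j
    have q2 : (2:ℕ)^(j+2) = 2 * 2^(j+1) := pow2_succ (j+1)
    have q3 : (2:ℕ)^(j+3) = 2 * 2^(j+2) := pow2_succ (j+2)
    have q4 : (2:ℕ)^(j+4) = 2 * 2^(j+3) := pow2_succ (j+3)
    show b (2^(j+4) + 2^(j+2) + u) = 0
    rcases Nat.even_or_odd u with ⟨r, hrr⟩ | ⟨s, hs⟩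
    · rcases Nat.even_or_odd r with ⟨r', hr'⟩ | ⟨r', hr'⟩
      · rw [show 2^(j+4) + 2^(j+2) + u = 4 * (2^(j+2) + 2^j + r') by omega, h2]
        exact ih j (by omega) r' (by omega)
      · rw [show 2^(j+4) + 2^(j+2) + u = 4 * (2^(j+2) + 2^j + r') + 2 by omega, h3]
    · rw [show 2^(j+4) + 2^(j+2) + u = 2 * (2^(j+3) + 2^(j+1) + s) + 1 by omega, h1]
      exact ih (j+1) (by omega) s (by omega)

/-- For the Baum–Sweet sequence `b` and `L k = {m : 2^k ≤ m < 2^{k+1}, b m = 1}`,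
one has `L k = (L (k-2) + (2^k - 2^{k-2})) ∪ (L (k-1) + 2^k)` for `k ≥ 2`. -/
theorem baumSweet_level_sets_recurrence
    (b : ℕ → ℕ) (h0 : b 0 = 1)
    (h1 : ∀ n, b (2 * n + 1) = b n)
    (h2 : ∀ n, b (4 * n) = b n)
    (h3 : ∀ n, b (4 * n + 2) = 0)
    (L : ℕ → Set ℕ)
    (hL : ∀ k, L k = {m : ℕ | 2 ^ k ≤ m ∧ m < 2 ^ (k + 1) ∧ b m = 1}) :
    ∀ k ≥ 2, L k =
      ((fun s => s + (2 ^ k - 2 ^ (k - 2))) '' L (k - 2)) ∪ ((fun s => s + 2 ^ k) '' L (k - 1)) := by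
  intro k hk
  obtain ⟨j, rfl⟩ : ∃ j, k = j + 2 := ⟨k - 2, by omega⟩
  have hk2 : j + 2 - 2 = j := by omega
  have hk1 : j + 2 - 1 = j + 1 := by omega
  rw [hk2, hk1, hL, hL, hL]
  have q1 : (2:ℕ)^(j+1) = 2 * 2^j := pow2_succ j
  have q2 : (2:ℕ)^(j+2) = 2 * 2^(j+1) := pow2_succ (j+1)
  have q3 : (2:ℕ)^(j+3) = 2 * 2^(j+2) := pow2_succ (j+2)
  ext m
  simp only [Set.mem_union, Set.mem_image, Set.mem_setOf_eq]
  constructor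
  · rintro ⟨hm1, hm2, hm3⟩
    have hm2' : m < 2^(j+3) := hm2
    by_cases hc1 : m < 2^(j+2) + 2^j
    · left
      refine ⟨2^j + (m - 2^(j+2)), ⟨by omega, by omega, ?_⟩, by omega⟩
      have hA := lemA b h1 h2 h3 j (m - 2^(j+2)) (by omega)
      rw [← hA, show 2^(j+2) + (m - 2^(j+2)) = m by omega]
      exact hm3
    · by_cases hc2 : m < 2^(j+2) + 2^(j+1)
      · exfalso
        have hC := lemC b h1 h2 h3 j (m - (2^(j+2) + 2^j)) (by omega)
        rw [show 2^(j+2) + 2^j + (m - (2^(j+2) + 2^j)) = m by omega] at hC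
        omega
      · right
        refine ⟨m - 2^(j+2), ⟨by omega, by omega, ?_⟩, by omega⟩
        have hB : b (2^(j+2) + 2^(j+1) + (m - (2^(j+2) + 2^(j+1)))) =
            b (2^(j+1) + (m - (2^(j+2) + 2^(j+1)))) :=
          lemB b h1 h2 h3 (j+1) (m - (2^(j+2) + 2^(j+1))) (by omega)
        rw [show 2^(j+2) + 2^(j+1) + (m - (2^(j+2) + 2^(j+1))) = m by omega] at hB
        rw [show m - 2^(j+2) = 2^(j+1) + (m - (2^(j+2) + 2^(j+1))) by omega, ← hB]
        exact hm3
  · rintro (⟨x, ⟨hx1, hx2, hx3⟩, rfl⟩ | ⟨x, ⟨hx1, hx2, hx3⟩, rfl⟩)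
    · refine ⟨by omega, by omega, ?_⟩
      have hA := lemA b h1 h2 h3 j (x - 2^j) (by omega)
      rw [show x + (2^(j+2) - 2^j) = 2^(j+2) + (x - 2^j) by omega, hA,
          show 2^j + (x - 2^j) = x by omega]
      exact hx3
    · refine ⟨by omega, by omega, ?_⟩
      have hB : b (2^(j+2) + 2^(j+1) + (x - 2^(j+1))) = b (2^(j+1) + (x - 2^(j+1))) :=
        lemB b h1 h2 h3 (j+1) (x - 2^(j+1)) (by omega)
      rw [show x + 2^(j+2) = 2^(j+2) + 2^(j+1) + (x - 2^(j+1)) by omega, hB,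
          show 2^(j+1) + (x - 2^(j+1)) = x by omega]
      exact hx3
end

section
/- The formal power series B̄(X) = Σ b_n X^n ∈ ℂ[[X]], where (b_n) is the Baum–Sweet sequence, is not a rational function, i.e., there are no polynomials f, g ∈ ℂ[X] with g ≠ 0 and g·B̄ = f. -/
/-!
A power series `g⁻¹ f` with coefficients in a finite set is eventually periodic: past `deg f`
its coefficients satisfy a linear recurrence, so each block of `deg g - ord g` consecutive
coefficients determines the next one, and by pigeonhole two blocks repeat. The Baum–Sweet
sequence is not eventually periodic: it vanishes on `[5·2^j, 6·2^j)` (binary expansions beginning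
with `101`), which for large `j` contains a full period beyond its start, yet `b (4^k) = 1`.
-/

open Finset Polynomial

def EventuallyPeriodic {α : Type*} (a : ℕ → α) : Prop :=
  ∃ n₀ p, 0 < p ∧ Function.Periodic (fun k => a (n₀ + k)) p

theorem eventuallyPeriodic_of_window_determines_next {α : Type*} {a : ℕ → α}
    (ha : (Set.range a).Finite) (d N : ℕ)
    (h : ∀ n m, N ≤ n → N ≤ m → (∀ i < d, a (n + i) = a (m + i)) → a (n + d) = a (m + d)) :
    EventuallyPeriodic a := by
  obtain ⟨x, y, hxy, hwin⟩ := Set.Finite.exists_lt_map_eq_of_forall_mem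
    (f := fun n (i : Fin d) => a (N + n + i)) (t := Set.pi Set.univ fun _ => Set.range a)
    (fun n i _ => Set.mem_range_self _) (Set.Finite.pi fun _ => ha)
  have hagree : ∀ k, a (N + x + k) = a (N + y + k) := by
    intro k
    induction k using Nat.strong_induction_on with
    | _ k ih =>
      by_cases hk : k < d
      · exact congrFun hwin ⟨k, hk⟩
      · have := h (N + x + (k - d)) (N + y + (k - d)) (by omega) (by omega) fun i hi => by
          simpa only [add_assoc] using ih (k - d + i) (by omega)
        simpa only [add_assoc, Nat.sub_add_cancel (not_lt.1 hk)] using this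
  refine ⟨N + x, y - x, by omega, fun k => ?_⟩
  simpa only [show N + x + (k + (y - x)) = N + y + k by omega] using (hagree k).symm

theorem PowerSeries.coeff_polynomial_mul_mk {R : Type*} [CommSemiring R] (g : R[X])
    (a : ℕ → R) {m : ℕ} (hm : g.natDegree ≤ m) :
    coeff m ((g : PowerSeries R) * mk a) =
      ∑ k ∈ range (g.natDegree + 1), g.coeff k * a (m - k) := by
  rw [coeff_mul, Nat.sum_antidiagonal_eq_sum_range_succ_mk]
  simp only [Polynomial.coeff_coe, coeff_mk]
  refine (sum_subset (range_subset_range.2 (by omega)) fun k _ hk => ?_).symm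
  rw [coeff_eq_zero_of_natDegree_lt (by simp only [mem_range] at hk; omega), zero_mul]

/-- Past `deg f`, the coefficients of `g * a = f` satisfy `∑ₖ gₖ a (n + deg g - k) = 0`, a
recurrence whose leading coefficient is the trailing coefficient of `g`. -/
theorem next_eq_of_mul_eq_polynomial {R : Type*} [CommRing R] [IsDomain R] {a : ℕ → R}
    {f g : R[X]} (hg : g ≠ 0) (hfg : (g : PowerSeries R) * PowerSeries.mk a = f) {n m : ℕ}
    (hn : f.natDegree < n) (hm : f.natDegree < m)
    (hwin : ∀ i < g.natDegree - g.natTrailingDegree, a (n + i) = a (m + i)) :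
    a (n + (g.natDegree - g.natTrailingDegree)) =
      a (m + (g.natDegree - g.natTrailingDegree)) := by
  set D := g.natDegree
  set v := g.natTrailingDegree
  have hvD : v ≤ D := natTrailingDegree_le_natDegree g
  have hrec : ∀ n, f.natDegree < n → ∑ k ∈ range (D + 1), g.coeff k * a (n + D - k) = 0 := by
    intro n hn
    rw [← PowerSeries.coeff_polynomial_mul_mk g a (by omega), hfg, Polynomial.coeff_coe,
      coeff_eq_zero_of_natDegree_lt (by omega)]
  have hdiff : ∑ k ∈ range (D + 1), g.coeff k * (a (n + D - k) - a (m + D - k)) = 0 := by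
    simp only [mul_sub, sum_sub_distrib, hrec n hn, hrec m hm, sub_zero]
  rw [sum_eq_single_of_mem v (mem_range.2 (by omega)) fun k hkD hkv => ?_] at hdiff
  · rw [← trailingCoeff, mul_eq_zero, sub_eq_zero] at hdiff
    simpa only [show n + D - v = n + (D - v) by omega, show m + D - v = m + (D - v) by omega]
      using hdiff.resolve_left (mt trailingCoeff_eq_zero.1 hg)
  · rcases hkv.lt_or_gt with hk | hk
    · rw [coeff_eq_zero_of_lt_natTrailingDegree hk, zero_mul]
    · rw [mem_range] at hkD
      rw [show n + D - k = n + (D - k) by omega, show m + D - k = m + (D - k) by omega,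
        hwin (D - k) (by omega), sub_self, mul_zero]

theorem eventuallyPeriodic_of_mul_eq_polynomial {R : Type*} [CommRing R] [IsDomain R]
    {a : ℕ → R} {f g : R[X]} (hg : g ≠ 0) (hfg : (g : PowerSeries R) * PowerSeries.mk a = f)
    (ha : (Set.range a).Finite) : EventuallyPeriodic a :=
  eventuallyPeriodic_of_window_determines_next ha _ (f.natDegree + 1) fun _ _ hn hm =>
    next_eq_of_mul_eq_polynomial hg hfg hn hm

theorem Nat.exists_eq_four_mul_or_four_mul_add_two_or_two_mul_add_one (n : ℕ) :
    ∃ m, n = 4 * m ∨ n = 4 * m + 2 ∨ n = 2 * m + 1 :=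
  ⟨if n % 2 = 1 then n / 2 else n / 4, by split_ifs <;> omega⟩

theorem baumSweet_le_one {b : ℕ → ℕ} (h0 : b 0 = 1) (h1 : ∀ n, b (2 * n + 1) = b n)
    (h2 : ∀ n, b (4 * n) = b n) (h3 : ∀ n, b (4 * n + 2) = 0) (n : ℕ) : b n ≤ 1 := by
  induction n using Nat.strong_induction_on with
  | _ n ih =>
    obtain ⟨m, rfl | rfl | rfl⟩ :=
      Nat.exists_eq_four_mul_or_four_mul_add_two_or_two_mul_add_one n
    · rcases m.eq_zero_or_pos with rfl | hm
      · rw [h0]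
      · rw [h2]; exact ih m (by omega)
    · rw [h3]; exact zero_le_one
    · rw [h1]; exact ih m (by omega)

theorem baumSweet_four_pow {b : ℕ → ℕ} (h0 : b 0 = 1) (h1 : ∀ n, b (2 * n + 1) = b n)
    (h2 : ∀ n, b (4 * n) = b n) (k : ℕ) : b (4 ^ k) = 1 := by
  induction k with
  | zero => simpa [h0] using h1 0
  | succ k ih => rw [pow_succ', h2, ih]

/-- Numbers in `[5·2^j, 6·2^j)` begin with `101` in binary, an odd block of zeros. -/
theorem baumSweet_eq_zero_of_mem_Ico {b : ℕ → ℕ} (h1 : ∀ n, b (2 * n + 1) = b n)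
    (h2 : ∀ n, b (4 * n) = b n) (h3 : ∀ n, b (4 * n + 2) = 0) :
    ∀ j n, 5 * 2 ^ j ≤ n → n < 6 * 2 ^ j → b n = 0
  | 0, n, hl, hu => by
    obtain rfl : n = 5 := by omega
    rw [show 5 = 2 * 2 + 1 from rfl, h1 2]
    exact h3 0
  | 1, n, hl, hu => by
    obtain rfl | rfl : n = 10 ∨ n = 11 := by omega
    · exact h3 2
    · rw [h1 5, show 5 = 2 * 2 + 1 from rfl, h1 2]
      exact h3 0
  | j + 2, n, hl, hu => by
    rw [pow_succ, pow_succ] at hl hu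
    obtain ⟨m, rfl | rfl | rfl⟩ :=
      Nat.exists_eq_four_mul_or_four_mul_add_two_or_two_mul_add_one n
    · rw [h2]
      exact baumSweet_eq_zero_of_mem_Ico h1 h2 h3 j m (by omega) (by omega)
    · exact h3 m
    · rw [h1]
      exact baumSweet_eq_zero_of_mem_Ico h1 h2 h3 (j + 1) m (by rw [pow_succ]; omega)
        (by rw [pow_succ]; omega)

/-- The generating series `B̄ = Σ b_n X^n ∈ ℂ[[X]]` of the Baum–Sweet sequence is not a
rational function: there are no polynomials `f, g ∈ ℂ[X]` with `g ≠ 0` and `g·B̄ = f`. -/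
theorem baumSweet_series_not_rational
    (b : ℕ → ℕ) (h0 : b 0 = 1)
    (h1 : ∀ n, b (2 * n + 1) = b n)
    (h2 : ∀ n, b (4 * n) = b n)
    (h3 : ∀ n, b (4 * n + 2) = 0) :
    ¬ ∃ (f g : Polynomial ℂ), g ≠ 0 ∧
      (g : PowerSeries ℂ) * PowerSeries.mk (fun n => (b n : ℂ)) = (f : PowerSeries ℂ) := by
  rintro ⟨f, g, hg, hfg⟩
  have hfin : (Set.range fun n => (b n : ℂ)).Finite :=
    ((Set.finite_Iic 1).image (Nat.cast : ℕ → ℂ)).subset <| Set.range_subset_iff.2 fun n =>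
      ⟨b n, baumSweet_le_one h0 h1 h2 h3 n, rfl⟩
  obtain ⟨n₀, p, hp, hper⟩ := eventuallyPeriodic_of_mul_eq_polynomial hg hfg hfin
  set t := 5 * 2 ^ (n₀ + p)
  have hlt : n₀ + p < 2 ^ (n₀ + p) := Nat.lt_two_pow_self
  have ht : t < 4 ^ t := Nat.lt_two_pow_self.trans_le (Nat.pow_le_pow_left (by norm_num) t)
  have hzero : ∀ k < p, b (t + k) = 0 := fun k hk =>
    baumSweet_eq_zero_of_mem_Ico h1 h2 h3 (n₀ + p) _ (by omega) (by omega)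
  have hmod : (b (t + (4 ^ t - t) % p) : ℂ) = b (4 ^ t) := by
    have := (hper.const_add (t - n₀)).map_mod_nat (4 ^ t - t)
    simp only [← add_assoc, Nat.add_sub_cancel' (show n₀ ≤ t by omega),
      Nat.add_sub_cancel' ht.le] at this
    exact this
  rw [hzero _ (Nat.mod_lt _ hp), baumSweet_four_pow h0 h1 h2] at hmod
  exact zero_ne_one (Nat.cast_injective hmod)
end

section
/- The formal power series B = Σ b_n X^n ∈ 𝔽₂[[X]], where (b_n) is the Baum–Sweet sequence, satisfies B^4 + X·B^2 + B = 0. -/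
/-!
The recurrences say that the even part of `B` is `B(X²)` (as `b (4n) = b n`, `b (4n + 2) = 0`)
and the odd part is `X·B(X²)` (as `b (2n + 1) = b n`), so `B = B(X⁴) + X·B(X²)`.
Over `𝔽₂` the Frobenius gives `B(X²) = B²`, hence `B = B⁴ + X·B²`, and `B + B = 0`.
-/

open PowerSeries

namespace PowerSeries

variable {R : Type*} [CommRing R]

theorem coeff_two_mul_X_mul_expand_two (φ : R⟦X⟧) (k : ℕ) :
    coeff (2 * k) (X * expand 2 two_ne_zero φ) = 0 := by
  rcases k with _ | k
  · simp
  · rw [show 2 * (k + 1) = 2 * k + 1 + 1 by ring, coeff_succ_X_mul,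
      coeff_expand_of_not_dvd _ _ _ (by omega)]

theorem eq_expand_two_add_X_mul_expand_two {φ ψ₀ ψ₁ : R⟦X⟧}
    (h₀ : ∀ n, coeff (2 * n) φ = coeff n ψ₀) (h₁ : ∀ n, coeff (2 * n + 1) φ = coeff n ψ₁) :
    φ = expand 2 two_ne_zero ψ₀ + X * expand 2 two_ne_zero ψ₁ := by
  ext n
  obtain ⟨k, rfl | rfl⟩ := Nat.even_or_odd' n
  · rw [map_add, coeff_expand_mul, coeff_two_mul_X_mul_expand_two, h₀, add_zero]
  · rw [map_add, coeff_expand_of_not_dvd _ _ _ (by omega), coeff_succ_X_mul, coeff_expand_mul,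
      h₁, zero_add]

end PowerSeries

theorem ZMod.powerSeries_expand_card (p : ℕ) [Fact p.Prime] (f : (ZMod p)⟦X⟧) :
    expand p (NeZero.ne p) f = f ^ p := by
  rw [← MvPowerSeries.map_frobenius_expand p (NeZero.ne p), ZMod.frobenius_zmod,
    MvPowerSeries.map_id]
  rfl

theorem baumSweet_series_algebraic_equation_general
    (b : ℕ → ZMod 2)
    (h1 : ∀ n, b (2 * n + 1) = b n)
    (h2 : ∀ n, b (4 * n) = b n)
    (h3 : ∀ n, b (4 * n + 2) = 0) :
    (PowerSeries.mk b) ^ 4 + PowerSeries.X * (PowerSeries.mk b) ^ 2 + PowerSeries.mk b = 0 := by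
  set B := mk b
  have hEven : mk (fun n => b (2 * n)) = B ^ 2 := by
    rw [eq_expand_two_add_X_mul_expand_two (φ := mk fun n => b (2 * n)) (ψ₀ := B) (ψ₁ := 0)
        (fun n => by simp [B, ← mul_assoc, h2]) (fun n => by simp [← mul_assoc, mul_add, h3]),
      ZMod.powerSeries_expand_card, map_zero, mul_zero, add_zero]
  have hB : B = expand 2 two_ne_zero (B ^ 2) + X * expand 2 two_ne_zero B := by
    rw [← hEven]
    exact eq_expand_two_add_X_mul_expand_two (fun n => by simp [B]) (fun n => by simp [B, h1])
  rw [ZMod.powerSeries_expand_card, ZMod.powerSeries_expand_card, ← pow_mul] at hB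
  calc B ^ 4 + X * B ^ 2 + B = B + B := by rw [← hB]
    _ = 0 := by ext n; simp [CharTwo.add_self_eq_zero]

/-- The generating series `B = Σ b_n X^n ∈ 𝔽₂[[X]]` of the Baum–Sweet sequence
satisfies `B^4 + X·B^2 + B = 0`. -/
theorem baumSweet_series_algebraic_equation
    (b : ℕ → ZMod 2) (h0 : b 0 = 1)
    (h1 : ∀ n, b (2 * n + 1) = b n)
    (h2 : ∀ n, b (4 * n) = b n)
    (h3 : ∀ n, b (4 * n + 2) = 0) :
    (PowerSeries.mk b) ^ 4 + PowerSeries.X * (PowerSeries.mk b) ^ 2 + PowerSeries.mk b = 0 :=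
  baumSweet_series_algebraic_equation_general b h1 h2 h3
end

section
/- Let C = B + 1 ∈ 𝔽₂[[X]] where B is the generating series of the Baum–Sweet sequence, so C has zero constant term and coefficient of X equal to 1, and let P be the compositional inverse of C (i.e., C(P(X)) = P(C(X)) = X). Then the coefficient sequence (p_n) of P satisfies p_0 = 0, p_2 = 0, and p_n = 1 for all other n. -/
open PowerSeries

/-!
Squaring is the Frobenius of `𝔽₂[[X]]`, so the recursion of `b` says `B = X B² + B⁴`, that is
`X B + B³ = 1` and `B⁻¹ = X + B²`. For `C = B + 1` we have `C - 1 = B`, hence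
`∑_{k<N} Cᵏ = (C^N - 1) B⁻¹ ≡ X + B² = X + 1 + C²` modulo `X^N` in characteristic two. Thus
`X = ∑_{k ≥ 1, k ≠ 2} Cᵏ`, i.e. `Q = ∑_{k ≥ 1, k ≠ 2} Xᵏ` satisfies `Q(C) = X`. As `C` has linear
coefficient `1`, the equation `P(C) = X` determines `P` coefficient by coefficient, so `P = Q`.
-/

/-- `SubstEq f a h` says that substituting the power series `a` (with zero constant term)
for `X` in `f` yields `h`: for each `n`, the `n`-th coefficient of the truncated
composition `Σ_{k ≤ n} f_k a^k` equals the `n`-th coefficient of `h`. (Since `a` has zero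
constant term, terms with `k > n` do not contribute to the `n`-th coefficient.) -/
def SubstEq (f a h : PowerSeries (ZMod 2)) : Prop :=
  ∀ n : ℕ, (PowerSeries.coeff (R := ZMod 2) n)
      (∑ k ∈ Finset.range (n + 1), PowerSeries.C (R := ZMod 2) ((PowerSeries.coeff (R := ZMod 2) k) f) * a ^ k)
    = (PowerSeries.coeff (R := ZMod 2) n) h

namespace PowerSeries

variable {R : Type*} [CommRing R]

instance charP (p : ℕ) [CharP R p] : CharP R⟦X⟧ p :=
  charP_of_injective_algebraMap (R := R) (fun x y h => by simpa using congrArg constantCoeff h) p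

theorem pow_prime_pow_eq_expand {p : ℕ} [Fact p.Prime] (k : ℕ) (f : (ZMod p)⟦X⟧) :
    f ^ p ^ k = expand (p ^ k) (pow_ne_zero k (Fact.out : p.Prime).ne_zero) f := by
  have hid : iterateFrobenius (ZMod p) p k = RingHom.id _ := by
    ext x; rw [iterateFrobenius_def, ZMod.pow_card_pow, RingHom.id_apply]
  have := MvPowerSeries.map_iterateFrobenius_expand p (Fact.out : p.Prime).ne_zero f k
  rw [hid, MvPowerSeries.map_id] at this
  exact this.symm

theorem coeff_pow_mul_eq_zero_of_lt {a : R⟦X⟧} (ha : constantCoeff a = 0) (g : R⟦X⟧)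
    {n N : ℕ} (h : n < N) : coeff n (a ^ N * g) = 0 := by
  obtain ⟨d, rfl⟩ := X_dvd_iff.mpr ha
  rw [mul_pow, mul_assoc, coeff_X_pow_mul', if_neg (by omega)]

theorem coeff_pow_self_of_constantCoeff_eq_zero {a : R⟦X⟧} (ha : constantCoeff a = 0) (n : ℕ) :
    coeff n (a ^ n) = coeff 1 a ^ n := by
  obtain ⟨d, rfl⟩ := X_dvd_iff.mpr ha
  rw [mul_pow, coeff_X_pow_mul', if_pos le_rfl, Nat.sub_self, coeff_zero_eq_constantCoeff,
    map_pow, ← coeff_zero_eq_constantCoeff, ← coeff_succ_X_mul]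

theorem coeff_sum_range_C_mul_pow_of_lt {a : R⟦X⟧} (ha : constantCoeff a = 0) (f : R⟦X⟧)
    {n N : ℕ} (h : n < N) :
    coeff n (∑ k ∈ Finset.range N, C (coeff k f) * a ^ k) =
      coeff n (∑ k ∈ Finset.range (n + 1), C (coeff k f) * a ^ k) := by
  rw [← Finset.sum_range_add_sum_Ico _ h, map_add, add_eq_left, map_sum]
  refine Finset.sum_eq_zero fun k hk => ?_
  rw [mul_comm, coeff_pow_mul_eq_zero_of_lt ha _ (Finset.mem_Ico.mp hk).1]

theorem coeff_sum_range_succ_C_mul_pow {a : R⟦X⟧} (ha : constantCoeff a = 0)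
    (ha₁ : coeff 1 a = 1) (f : R⟦X⟧) (n : ℕ) :
    coeff n (∑ k ∈ Finset.range (n + 1), C (coeff k f) * a ^ k) =
      ∑ k ∈ Finset.range n, coeff k f * coeff n (a ^ k) + coeff n f := by
  rw [map_sum, Finset.sum_range_succ]
  simp only [coeff_C_mul]
  rw [coeff_pow_self_of_constantCoeff_eq_zero ha, ha₁, one_pow, mul_one]

end PowerSeries

theorem SubstEq.left_unique {f g a h : (ZMod 2)⟦X⟧} (ha : constantCoeff a = 0)
    (ha₁ : coeff 1 a = 1) (hf : SubstEq f a h) (hg : SubstEq g a h) : f = g := by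
  ext n
  induction n using Nat.strong_induction_on with
  | _ n ih =>
    have hfg := (hf n).trans (hg n).symm
    rw [coeff_sum_range_succ_C_mul_pow ha ha₁, coeff_sum_range_succ_C_mul_pow ha ha₁,
      Finset.sum_congr rfl fun k hk => by rw [ih k (Finset.mem_range.mp hk)]] at hfg
    exact add_left_cancel hfg

theorem SubstEq.of_sum_range {f a h : (ZMod 2)⟦X⟧} (ha : constantCoeff a = 0) (m : ℕ)
    (hsum : ∀ n, coeff n (∑ k ∈ Finset.range (n + m + 1), C (coeff k f) * a ^ k) = coeff n h) :
    SubstEq f a h := fun n => by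
  rw [← coeff_sum_range_C_mul_pow_of_lt ha f (by omega : n < n + m + 1), hsum]

theorem geom_sum_add_one_of_mul_add_pow_three_eq_one {R : Type*} [CommRing R] [CharP R 2]
    {x B : R} (h : x * B + B ^ 3 = 1) (N : ℕ) :
    ∑ k ∈ Finset.range N, (B + 1) ^ k = 1 + (B + 1) ^ 2 + (x + (B + 1) ^ N * (x + B ^ 2)) := by
  linear_combination
    (x + B ^ 2) * geom_sum_mul (B + 1) N - (∑ k ∈ Finset.range N, (B + 1) ^ k) * h
    - (x + B ^ 2 + B + 1) * (CharTwo.two_eq_zero : (2 : R) = 0)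

theorem baumSweet_succ (b : ℕ → ZMod 2) (h1 : ∀ n, b (2 * n + 1) = b n)
    (h2 : ∀ n, b (4 * n) = b n) (h3 : ∀ n, b (4 * n + 2) = 0) (m : ℕ) :
    b (m + 1) = (if 2 ∣ m then b (m / 2) else 0) + if 4 ∣ m + 1 then b ((m + 1) / 4) else 0 := by
  obtain ⟨k, r, hr, rfl⟩ : ∃ k r, r < 4 ∧ m = 4 * k + r := ⟨m / 4, m % 4, by omega, by omega⟩
  interval_cases r
  · rw [if_pos (by omega), if_neg (by omega), add_zero,
      show 4 * k + 0 + 1 = 2 * (2 * k) + 1 by ring, h1, show 4 * k / 2 = 2 * k by omega, add_zero]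
  · rw [if_neg (by omega), if_neg (by omega), add_zero, h3]
  · rw [if_pos (by omega), if_neg (by omega), add_zero,
      show 4 * k + 2 + 1 = 2 * (2 * k + 1) + 1 by ring, h1, show (4 * k + 2) / 2 = 2 * k + 1 by omega]
  · rw [if_neg (by omega), if_pos (by omega), zero_add, show 4 * k + 3 + 1 = 4 * (k + 1) by ring,
      h2, show 4 * (k + 1) / 4 = k + 1 by omega]

theorem baumSweet_functional_equation (b : ℕ → ZMod 2) (h1 : ∀ n, b (2 * n + 1) = b n)
    (h2 : ∀ n, b (4 * n) = b n) (h3 : ∀ n, b (4 * n + 2) = 0) :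
    mk b = X * mk b ^ 2 + mk b ^ 4 := by
  rw [show mk b ^ 2 = mk b ^ 2 ^ 1 by norm_num, show mk b ^ 4 = mk b ^ 2 ^ 2 by norm_num,
    pow_prime_pow_eq_expand, pow_prime_pow_eq_expand]
  ext (_ | m)
  · simp
  · rw [map_add, coeff_succ_X_mul, coeff_expand, coeff_expand, coeff_mk, coeff_mk, coeff_mk]
    exact baumSweet_succ b h1 h2 h3 m

theorem baumSweet_X_mul_add_pow_three_eq_one (b : ℕ → ZMod 2) (h0 : b 0 = 1)
    (h1 : ∀ n, b (2 * n + 1) = b n) (h2 : ∀ n, b (4 * n) = b n) (h3 : ∀ n, b (4 * n + 2) = 0) :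
    X * mk b + mk b ^ 3 = 1 := by
  have hB : mk b ≠ 0 := fun h => by simpa [h0] using congrArg constantCoeff h
  refine mul_left_cancel₀ hB ?_
  linear_combination (baumSweet_functional_equation b h1 h2 h3).symm

theorem constantCoeff_mk_add_one {b : ℕ → ZMod 2} (h0 : b 0 = 1) :
    constantCoeff (mk b + 1) = 0 := by
  rw [map_add, constantCoeff_mk, h0, constantCoeff_one]
  decide

def baumSweetVariantInverse : (ZMod 2)⟦X⟧ := mk fun n => if n = 0 ∨ n = 2 then 0 else 1

theorem sum_range_C_coeff_baumSweetVariantInverse_mul_pow (c : (ZMod 2)⟦X⟧) (n : ℕ) :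
    ∑ k ∈ Finset.range (n + 3), C (coeff k baumSweetVariantInverse) * c ^ k =
      ∑ k ∈ Finset.range (n + 3), c ^ k - (1 + c ^ 2) := by
  have hq : ∀ k, coeff (k + 3) baumSweetVariantInverse = 1 := fun k => by
    simp [baumSweetVariantInverse]
  obtain ⟨hq₀, hq₁, hq₂⟩ : coeff 0 baumSweetVariantInverse = 0 ∧
      coeff 1 baumSweetVariantInverse = 1 ∧ coeff 2 baumSweetVariantInverse = 0 := by
    simp [baumSweetVariantInverse]
  simp only [Finset.sum_range_succ' _ (n + 2), Finset.sum_range_succ' _ (n + 1),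
    Finset.sum_range_succ' _ n, hq, hq₀, hq₁, hq₂, map_zero, map_one, zero_mul, one_mul]
  ring

theorem substEq_baumSweetVariantInverse (b : ℕ → ZMod 2) (h0 : b 0 = 1)
    (h1 : ∀ n, b (2 * n + 1) = b n) (h2 : ∀ n, b (4 * n) = b n) (h3 : ∀ n, b (4 * n + 2) = 0) :
    SubstEq baumSweetVariantInverse (mk b + 1) X := by
  have hc := constantCoeff_mk_add_one h0
  refine SubstEq.of_sum_range hc 2 fun n => ?_
  rw [sum_range_C_coeff_baumSweetVariantInverse_mul_pow,
    geom_sum_add_one_of_mul_add_pow_three_eq_one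
      (baumSweet_X_mul_add_pow_three_eq_one b h0 h1 h2 h3),
    add_sub_cancel_left, map_add, coeff_pow_mul_eq_zero_of_lt hc _ (by omega), add_zero]

theorem baumSweet_variant_one_formal_inverse_general
    (b : ℕ → ZMod 2) (h0 : b 0 = 1)
    (h1 : ∀ n, b (2 * n + 1) = b n)
    (h2 : ∀ n, b (4 * n) = b n)
    (h3 : ∀ n, b (4 * n + 2) = 0)
    (P : PowerSeries (ZMod 2))
    (hPC : SubstEq P (PowerSeries.mk b + 1) PowerSeries.X) :
    (PowerSeries.coeff (R := ZMod 2) 0) P = 0 ∧ (PowerSeries.coeff (R := ZMod 2) 2) P = 0 ∧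
      ∀ n : ℕ, n ≠ 0 → n ≠ 2 → (PowerSeries.coeff (R := ZMod 2) n) P = 1 := by
  have hc₀ := constantCoeff_mk_add_one h0
  have hc₁ : coeff 1 (mk b + 1) = 1 := by simpa using (h1 0).trans h0
  obtain rfl := hPC.left_unique hc₀ hc₁ (substEq_baumSweetVariantInverse b h0 h1 h2 h3)
  exact ⟨by simp [baumSweetVariantInverse], by simp [baumSweetVariantInverse],
    fun n hn₀ hn₂ => by simp [baumSweetVariantInverse, hn₀, hn₂]⟩

/-- Let `B ∈ 𝔽₂[[X]]` be the generating series of the Baum–Sweet sequence, `C = B + 1`,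
and `P` the compositional inverse of `C` (so `C(P(X)) = P(C(X)) = X`). Then the coefficients
`p_n` of `P` satisfy `p_0 = 0`, `p_2 = 0`, and `p_n = 1` for all other `n`. -/
theorem baumSweet_variant_one_formal_inverse
    (b : ℕ → ZMod 2) (h0 : b 0 = 1)
    (h1 : ∀ n, b (2 * n + 1) = b n)
    (h2 : ∀ n, b (4 * n) = b n)
    (h3 : ∀ n, b (4 * n + 2) = 0)
    (P : PowerSeries (ZMod 2))
    (hP0 : PowerSeries.constantCoeff (R := ZMod 2) P = 0)
    (hCP : SubstEq (PowerSeries.mk b + 1) P PowerSeries.X)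
    (hPC : SubstEq P (PowerSeries.mk b + 1) PowerSeries.X) :
    (PowerSeries.coeff (R := ZMod 2) 0) P = 0 ∧ (PowerSeries.coeff (R := ZMod 2) 2) P = 0 ∧
      ∀ n : ℕ, n ≠ 0 → n ≠ 2 → (PowerSeries.coeff (R := ZMod 2) n) P = 1 :=
  baumSweet_variant_one_formal_inverse_general b h0 h1 h2 h3 P hPC
end

section
/- Let D = X·B ∈ 𝔽₂[[X]] where B is the generating series of the Baum–Sweet sequence, and let Q = Σ q_n X^n be the compositional inverse of D. Then q_{4n} = q_{4n+3} = 0 and q_{4n+1} = q_{4n+2} = q_{n+1} for all n ∈ ℕ, and q_1 = 1. -/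
/-!
Over `𝔽₂` we have `f ^ 4 = f(X ^ 4)`, so the recurrences for `b` say exactly that
`B = B ^ 4 + X * B ^ 2`; hence `D = X * B` satisfies `D ^ 4 = X ^ 3 * D + X ^ 3 * D ^ 2`.
Substituting `Q` and cancelling `X` gives `X ^ 3 * Q = (1 + X) * Q ^ 4`, and since
`Q ^ 4 = Σ q_k X ^ (4 k)`, comparing coefficients of `X ^ (m + 3)` gives
`q_m = [X ^ (m + 3)] Q ^ 4 + [X ^ (m + 2)] Q ^ 4`, which is the claim for each residue of `m` mod 4.
-/

open PowerSeries

namespace PowerSeries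

theorem pow_card_eq_expand {K : Type*} [Field K] [Fintype K] (f : K⟦X⟧) :
    f ^ Fintype.card K = expand (Fintype.card K) Fintype.card_ne_zero f := by
  ext n
  set T := trunc (n + 1) f
  have hT : coeff n (f ^ Fintype.card K) = coeff n ((T : K⟦X⟧) ^ Fintype.card K) := by
    rw [← coeff_coe_trunc_of_lt n.lt_succ_self, ← trunc_trunc_pow,
      coeff_coe_trunc_of_lt n.lt_succ_self]
  rw [hT, ← Polynomial.coe_pow, Polynomial.coeff_coe, ← FiniteField.expand_card,
    Polynomial.coeff_expand Fintype.card_pos, coeff_expand, coeff_trunc,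
    if_pos (Nat.lt_succ_of_le (Nat.div_le_self n _))]

theorem sq_eq_expand (f : (ZMod 2)⟦X⟧) : f ^ 2 = expand 2 two_ne_zero f := by
  simpa using pow_card_eq_expand f

theorem pow_four_eq_expand (f : (ZMod 2)⟦X⟧) : f ^ 4 = expand 4 four_ne_zero f := by
  rw [show f ^ 4 = (f ^ 2) ^ 2 by ring, sq_eq_expand, sq_eq_expand, ← expand_mul]

theorem X_pow_three_mul_eq_of_subst_eq_X {R : Type*} [CommRing R] {D Q : R⟦X⟧}
    (hD : D ^ 4 = X ^ 3 * D + X ^ 3 * D ^ 2) (hQ : HasSubst Q) (hDQ : D.subst Q = X) :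
    X ^ 3 * Q = (1 + X) * Q ^ 4 := by
  have h := congrArg (subst Q) hD
  rw [subst_pow hQ, subst_add hQ, subst_mul hQ, subst_mul hQ, subst_pow hQ, subst_pow hQ,
    subst_X hQ, hDQ] at h
  apply X_mul_cancel
  linear_combination Q * h

end PowerSeries

theorem SubstEq.subst_eq {f a g : (ZMod 2)⟦X⟧} (ha : constantCoeff a = 0) (h : SubstEq f a g) :
    f.subst a = g := by
  ext n
  rw [← h n, coeff_subst' (HasSubst.of_constantCoeff_zero' ha), map_sum,
    finsum_eq_sum_of_support_subset _ (s := Finset.range (n + 1))]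
  · simp only [coeff_C_mul, smul_eq_mul]
  · intro k hk
    rw [Finset.coe_range, Set.mem_Iio]
    by_contra hkn
    have hX : X ^ k ∣ a ^ k := pow_dvd_pow_of_dvd (X_dvd_iff.mpr ha) k
    exact hk (by simp only [X_pow_dvd_iff.mp hX n (by omega), smul_zero])

theorem mk_eq_pow_four_add_of_baumSweet {b : ℕ → ZMod 2}
    (h1 : ∀ n, b (2 * n + 1) = b n) (h2 : ∀ n, b (4 * n) = b n) (h3 : ∀ n, b (4 * n + 2) = 0) :
    mk b = mk b ^ 4 + X * mk b ^ 2 := by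
  rw [pow_four_eq_expand, sq_eq_expand]
  ext n
  obtain ⟨k, hk⟩ : ∃ k, n = 4 * k ∨ n = 4 * k + 1 ∨ n = 4 * k + 2 ∨ n = 4 * k + 3 :=
    ⟨n / 4, by omega⟩
  rcases hk with rfl | rfl | rfl | rfl
  · rw [map_add, coeff_expand_mul, coeff_mk, coeff_mk, h2, left_eq_add]
    rcases k with _ | j
    · exact coeff_zero_X_mul _
    rw [show 4 * (j + 1) = 4 * j + 3 + 1 by ring, coeff_succ_X_mul,
      coeff_expand_of_not_dvd _ _ _ (by omega)]
  · rw [map_add, coeff_succ_X_mul, coeff_expand_of_not_dvd _ _ _ (by omega), zero_add,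
      show 4 * k = 2 * (2 * k) by ring, coeff_expand_mul, coeff_mk, coeff_mk, h1]
  · rw [map_add, show 4 * k + 2 = 2 * (2 * k) + 1 + 1 by ring, coeff_succ_X_mul,
      coeff_expand_of_not_dvd _ _ _ (by omega), coeff_expand_of_not_dvd _ _ _ (by omega),
      add_zero, coeff_mk, show 2 * (2 * k) + 1 + 1 = 4 * k + 2 by ring, h3]
  · rw [map_add, coeff_succ_X_mul, coeff_expand_of_not_dvd _ _ _ (by omega), zero_add,
      show 4 * k + 2 = 2 * (2 * k + 1) by ring, coeff_expand_mul, coeff_mk, coeff_mk,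
      show 4 * k + 3 = 2 * (2 * k + 1) + 1 by ring, h1]

theorem coeff_four_mul_add_of_X_pow_three_mul_eq {Q : (ZMod 2)⟦X⟧}
    (hQ : X ^ 3 * Q = (1 + X) * Q ^ 4) (n : ℕ) :
    coeff (4 * n) Q = 0 ∧ coeff (4 * n + 3) Q = 0 ∧
      coeff (4 * n + 1) Q = coeff (n + 1) Q ∧ coeff (4 * n + 2) Q = coeff (n + 1) Q := by
  have key (m : ℕ) : coeff m Q =
      coeff (m + 3) (expand 4 four_ne_zero Q) + coeff (m + 2) (expand 4 four_ne_zero Q) := by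
    have h := congrArg (coeff (m + 3)) hQ
    rwa [coeff_X_pow_mul, add_mul, one_mul, map_add, pow_four_eq_expand,
      show m + 3 = m + 2 + 1 by ring, coeff_succ_X_mul] at h
  have h4 (k : ℕ) : coeff (4 * k) (expand 4 four_ne_zero Q) = coeff k Q := coeff_expand_mul ..
  have hnd {m : ℕ} (hm : ¬ 4 ∣ m) : coeff m (expand 4 four_ne_zero Q) = 0 :=
    coeff_expand_of_not_dvd _ _ _ hm
  refine ⟨?_, ?_, ?_, ?_⟩ <;> rw [key]
  · rw [hnd (by omega), hnd (by omega), add_zero]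
  · rw [show 4 * n + 3 + 3 = 4 * n + 6 by ring, hnd (by omega), hnd (by omega), add_zero]
  · rw [show 4 * n + 1 + 3 = 4 * (n + 1) by ring, h4, hnd (by omega), add_zero]
  · rw [show 4 * n + 2 + 2 = 4 * (n + 1) by ring, h4, hnd (by omega), zero_add]

theorem baumSweet_variant_two_formal_inverse_recurrences_general
    (b : ℕ → ZMod 2) (h0 : b 0 = 1)
    (h1 : ∀ n, b (2 * n + 1) = b n)
    (h2 : ∀ n, b (4 * n) = b n)
    (h3 : ∀ n, b (4 * n + 2) = 0)
    (Q : PowerSeries (ZMod 2))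
    (hQ0 : PowerSeries.constantCoeff (R := ZMod 2) Q = 0)
    (hDQ : SubstEq (PowerSeries.X * PowerSeries.mk b) Q PowerSeries.X) :
    (∀ n : ℕ, (PowerSeries.coeff (R := ZMod 2) (4 * n)) Q = 0
      ∧ (PowerSeries.coeff (R := ZMod 2) (4 * n + 3)) Q = 0
      ∧ (PowerSeries.coeff (R := ZMod 2) (4 * n + 1)) Q = (PowerSeries.coeff (R := ZMod 2) (n + 1)) Q
      ∧ (PowerSeries.coeff (R := ZMod 2) (4 * n + 2)) Q = (PowerSeries.coeff (R := ZMod 2) (n + 1)) Q)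
    ∧ (PowerSeries.coeff (R := ZMod 2) 1) Q = 1 := by
  have hB := mk_eq_pow_four_add_of_baumSweet h1 h2 h3
  have two : (2 : (ZMod 2)⟦X⟧) = 0 := by
    rw [← map_ofNat C 2, show (OfNat.ofNat 2 : ZMod 2) = 0 from rfl, map_zero]
  have hD : (X * mk b) ^ 4 = X ^ 3 * (X * mk b) + X ^ 3 * (X * mk b) ^ 2 := by
    linear_combination (-X ^ 4) * hB - X ^ 5 * mk b ^ 2 * two
  have hQ := X_pow_three_mul_eq_of_subst_eq_X hD (HasSubst.of_constantCoeff_zero' hQ0)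
    (SubstEq.subst_eq hQ0 hDQ)
  refine ⟨coeff_four_mul_add_of_X_pow_three_mul_eq hQ, ?_⟩
  simpa [Finset.sum_range_succ, coeff_X, h0] using hDQ 1

/-- Let `B ∈ 𝔽₂[[X]]` be the generating series of the Baum–Sweet sequence, `D = X·B`,
and `Q = Σ q_n X^n` the compositional inverse of `D`. Then `q_{4n} = q_{4n+3} = 0`,
`q_{4n+1} = q_{4n+2} = q_{n+1}` for all `n`, and `q_1 = 1`. -/
theorem baumSweet_variant_two_formal_inverse_recurrences
    (b : ℕ → ZMod 2) (h0 : b 0 = 1)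
    (h1 : ∀ n, b (2 * n + 1) = b n)
    (h2 : ∀ n, b (4 * n) = b n)
    (h3 : ∀ n, b (4 * n + 2) = 0)
    (Q : PowerSeries (ZMod 2))
    (hQ0 : PowerSeries.constantCoeff (R := ZMod 2) Q = 0)
    (hDQ : SubstEq (PowerSeries.X * PowerSeries.mk b) Q PowerSeries.X)
    (hQD : SubstEq Q (PowerSeries.X * PowerSeries.mk b) PowerSeries.X) :
    (∀ n : ℕ, (PowerSeries.coeff (R := ZMod 2) (4 * n)) Q = 0
      ∧ (PowerSeries.coeff (R := ZMod 2) (4 * n + 3)) Q = 0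
      ∧ (PowerSeries.coeff (R := ZMod 2) (4 * n + 1)) Q = (PowerSeries.coeff (R := ZMod 2) (n + 1)) Q
      ∧ (PowerSeries.coeff (R := ZMod 2) (4 * n + 2)) Q = (PowerSeries.coeff (R := ZMod 2) (n + 1)) Q)
    ∧ (PowerSeries.coeff (R := ZMod 2) 1) Q = 1 :=
  baumSweet_variant_two_formal_inverse_recurrences_general b h0 h1 h2 h3 Q hQ0 hDQ
end

section
/- Let (q_n) be the sequence over 𝔽₂ defined by q_0 = 0, q_1 = 1, q_{4n} = q_{4n+3} = 0, q_{4n+1} = q_{4n+2} = q_{n+1}. Then q_n = 1 if and only if every digit of n in base 4 is 0 or 1, except the last (least significant) digit, which is 1 or 2. -/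
/-- Let `(q n)` be defined by `q 0 = 0`, `q 1 = 1`, `q (4n) = q (4n+3) = 0`,
`q (4n+1) = q (4n+2) = q (n+1)`. Then `q n = 1` iff every base-4 digit of `n` is
`0` or `1`, except the last (least significant) digit, which is `1` or `2`. -/
theorem qSeq_one_iff_base_four_digits
    (q : ℕ → ZMod 2) (h0 : q 0 = 0) (h1 : q 1 = 1)
    (h4 : ∀ n, q (4 * n) = 0) (h43 : ∀ n, q (4 * n + 3) = 0)
    (h41 : ∀ n, q (4 * n + 1) = q (n + 1)) (h42 : ∀ n, q (4 * n + 2) = q (n + 1)) :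
    ∀ n : ℕ, q n = 1 ↔ ∃ (d : ℕ) (l : List ℕ), Nat.digits 4 n = d :: l ∧
      (d = 1 ∨ d = 2) ∧ ∀ x ∈ l, x = 0 ∨ x = 1 := by
  have key : ∀ m r, 0 < 4 * m + r → Nat.digits 4 (4 * m + r) = r % 4 :: Nat.digits 4 (m + r / 4) := by
    intro m r hpos
    rw [Nat.digits_def' (by norm_num : 1 < 4) hpos,
      show (4 * m + r) % 4 = r % 4 from by omega,
      show (4 * m + r) / 4 = m + r / 4 from by omega]
  have aux : ∀ n : ℕ, q (n + 1) = 1 ↔ ∀ x ∈ Nat.digits 4 n, x = 0 ∨ x = 1 := by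
    intro n
    induction n using Nat.strong_induction_on with
    | _ n ih =>
      obtain ⟨m, r, hr4, rfl⟩ : ∃ m r, r < 4 ∧ n = 4 * m + r :=
        ⟨n / 4, n % 4, Nat.mod_lt _ (by norm_num), by omega⟩
      interval_cases r
      · -- r = 0
        rcases Nat.eq_zero_or_pos m with rfl | hm
        · simpa using h1
        · have hd : Nat.digits 4 (4 * m + 0) = 0 :: Nat.digits 4 m := by
            simpa using key m 0 (by omega)
          have h41' : q (4 * m + 0 + 1) = q (m + 1) := by
            simpa using h41 m
          rw [h41', hd, ih m (by omega)]
          simp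
      · -- r = 1
        have hd : Nat.digits 4 (4 * m + 1) = 1 :: Nat.digits 4 m := by
          simpa using key m 1 (by omega)
        have h42' : q (4 * m + 1 + 1) = q (m + 1) := by
          simpa [show 4 * m + 1 + 1 = 4 * m + 2 by ring] using h42 m
        rw [h42', hd, ih m (by omega)]
        simp
      · -- r = 2
        have hd : Nat.digits 4 (4 * m + 2) = 2 :: Nat.digits 4 m := by
          simpa using key m 2 (by omega)
        have hq : q (4 * m + 2 + 1) = 0 := by
          simpa [show 4 * m + 2 + 1 = 4 * m + 3 by ring] using h43 m
        rw [hq, hd]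
        constructor
        · intro h; exact absurd h (by decide)
        · intro h
          have := h 2 (by simp)
          omega
      · -- r = 3
        have hd : Nat.digits 4 (4 * m + 3) = 3 :: Nat.digits 4 m := by
          simpa using key m 3 (by omega)
        have hq : q (4 * m + 3 + 1) = 0 := by
          simpa [show 4 * m + 3 + 1 = 4 * (m + 1) by ring] using h4 (m + 1)
        rw [hq, hd]
        constructor
        · intro h; exact absurd h (by decide)
        · intro h
          have := h 3 (by simp)
          omega
  intro n
  obtain ⟨m, r, hr4, rfl⟩ : ∃ m r, r < 4 ∧ n = 4 * m + r :=
    ⟨n / 4, n % 4, Nat.mod_lt _ (by norm_num), by omega⟩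
  interval_cases r
  · rcases Nat.eq_zero_or_pos m with rfl | hm
    · simp [h0]
    · have hd : Nat.digits 4 (4 * m + 0) = 0 :: Nat.digits 4 m := by
        simpa using key m 0 (by omega)
      have hq : q (4 * m + 0) = 0 := by simpa using h4 m
      rw [hq, hd]
      constructor
      · intro h; exact absurd h (by decide)
      · rintro ⟨d, l, heq, hd12, -⟩
        obtain ⟨rfl, rfl⟩ : 0 = d ∧ Nat.digits 4 m = l := by
          injection heq with a b; exact ⟨a, b⟩
        omega
  · have hd : Nat.digits 4 (4 * m + 1) = 1 :: Nat.digits 4 m := by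
      simpa using key m 1 (by omega)
    rw [h41 m, hd]
    constructor
    · intro h
      exact ⟨1, Nat.digits 4 m, rfl, Or.inl rfl, (aux m).mp h⟩
    · rintro ⟨d, l, heq, -, hl⟩
      obtain ⟨rfl, rfl⟩ : 1 = d ∧ Nat.digits 4 m = l := by
        injection heq with a b; exact ⟨a, b⟩
      exact (aux m).mpr hl
  · have hd : Nat.digits 4 (4 * m + 2) = 2 :: Nat.digits 4 m := by
      simpa using key m 2 (by omega)
    rw [h42 m, hd]
    constructor
    · intro h
      exact ⟨2, Nat.digits 4 m, rfl, Or.inr rfl, (aux m).mp h⟩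
    · rintro ⟨d, l, heq, -, hl⟩
      obtain ⟨rfl, rfl⟩ : 2 = d ∧ Nat.digits 4 m = l := by
        injection heq with a b; exact ⟨a, b⟩
      exact (aux m).mpr hl
  · have hd : Nat.digits 4 (4 * m + 3) = 3 :: Nat.digits 4 m := by
      simpa using key m 3 (by omega)
    rw [h43 m, hd]
    constructor
    · intro h; exact absurd h (by decide)
    · rintro ⟨d, l, heq, hd12, -⟩
      obtain ⟨rfl, rfl⟩ : 3 = d ∧ Nat.digits 4 m = l := by
        injection heq with a b; exact ⟨a, b⟩
      omega
end

section
/- Let (m_n) be the Moser–de Bruijn sequence (the increasing enumeration of sums of distinct powers of 4) and (u_n) the increasing enumeration of {m : q_m = 1}, where (q_n) satisfies q_0=0, q_1=1, q_{4n}=q_{4n+3}=0, q_{4n+1}=q_{4n+2}=q_{n+1}. Then u_n = m_n + 1 for all n ∈ ℕ. -/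
/-- Two strictly monotone sequences with the same range are equal. -/
lemma strictMono_range_eq {f g : ℕ → ℕ} (hf : StrictMono f) (hg : StrictMono g)
    (h : Set.range f = Set.range g) : ∀ n, f n = g n := by
  intro n
  induction n using Nat.strong_induction_on with
  | _ n ih =>
    obtain ⟨j, hj⟩ : f n ∈ Set.range g := h ▸ Set.mem_range_self n
    obtain ⟨i, hi⟩ : g n ∈ Set.range f := h.symm ▸ Set.mem_range_self n
    have hjn : n ≤ j := by
      by_contra hlt
      push_neg at hlt
      have hfj := ih j hlt
      have : f j = f n := (hfj.trans hj :)
      have := hf.injective this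
      omega
    have hin : n ≤ i := by
      by_contra hlt
      push_neg at hlt
      have hfi := ih i hlt
      have : g i = g n := (hfi.symm.trans hi :)
      have := hg.injective this
      omega
    have h1 : g n ≤ g j := hg.monotone hjn
    have h2 : f n ≤ f i := hf.monotone hin
    omega

/-- Let `(m n)` be the Moser–de Bruijn sequence and `(u n)` the increasing enumeration of
`{k : q k = 1}`, where `q` is the formal inverse coefficient sequence defined by the given
recurrences. Then `u n = m n + 1` for all `n`. -/
theorem qSeq_ones_enumeration_eq_moserDeBruijn_add_one
    (q : ℕ → ZMod 2) (hq0 : q 0 = 0) (hq1 : q 1 = 1)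
    (hq4 : ∀ n, q (4 * n) = 0) (hq43 : ∀ n, q (4 * n + 3) = 0)
    (hq41 : ∀ n, q (4 * n + 1) = q (n + 1)) (hq42 : ∀ n, q (4 * n + 2) = q (n + 1))
    (m : ℕ → ℕ) (hm0 : m 0 = 0)
    (hm2 : ∀ n, m (2 * n) = 4 * m n) (hm21 : ∀ n, m (2 * n + 1) = 4 * m n + 1)
    (u : ℕ → ℕ) (hmono : StrictMono u)
    (hrange : ∀ k : ℕ, q k = 1 ↔ k ∈ Set.range u) :
    ∀ n : ℕ, u n = m n + 1 := by
  -- m is strictly monotone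
  have mstep : ∀ n, m n < m (n + 1) := by
    intro n
    induction n using Nat.strong_induction_on with
    | _ n ih =>
      rcases Nat.even_or_odd n with ⟨j, hj⟩ | ⟨j, hj⟩
      · have hj2 : n = 2 * j := by omega
        subst hj2
        have := hm2 j
        have := hm21 j
        omega
      · subst hj
        have h1 := hm21 j
        have h3 := hm2 (j + 1)
        have h2 : m (2 * j + 1 + 1) = 4 * m (j + 1) := by
          rw [show 2 * j + 1 + 1 = 2 * (j + 1) by ring, hm2]
        have h4 := ih j (by omega)
        omega
  have mmono : StrictMono m := strictMono_nat_of_lt_succ mstep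
  -- forward: q (m n + 1) = 1
  have fwd : ∀ n, q (m n + 1) = 1 := by
    intro n
    induction n using Nat.strong_induction_on with
    | _ n ih =>
      rcases Nat.even_or_odd n with ⟨j, hj⟩ | ⟨j, hj⟩
      · have hj2 : n = 2 * j := by omega
        subst hj2
        rcases Nat.eq_zero_or_pos j with rfl | hjpos
        · simpa [hm0] using hq1
        · rw [hm2 j, hq41 (m j)]
          exact ih j (by omega)
      · subst hj
        rw [hm21 j, show 4 * m j + 1 + 1 = 4 * m j + 2 from rfl, hq42 (m j)]
        exact ih j (by omega)
  -- backward: q k = 1 → ∃ n, k = m n + 1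
  have bwd : ∀ k, q k = 1 → ∃ n, k = m n + 1 := by
    intro k
    induction k using Nat.strong_induction_on with
    | _ k ih =>
      intro hk
      obtain ⟨a, r, hr, rfl⟩ : ∃ a r, r < 4 ∧ k = 4 * a + r :=
        ⟨k / 4, k % 4, Nat.mod_lt _ (by norm_num), (Nat.div_add_mod k 4).symm⟩
      interval_cases r
      · rw [Nat.add_zero, hq4 a] at hk; exact absurd hk (by decide)
      · rw [hq41 a] at hk
        rcases Nat.eq_zero_or_pos a with rfl | hapos
        · exact ⟨0, by simp [hm0]⟩
        · obtain ⟨n, hn⟩ := ih (a + 1) (by omega) hk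
          exact ⟨2 * n, by rw [hm2 n]; omega⟩
      · rw [hq42 a] at hk
        obtain ⟨n, hn⟩ := ih (a + 1) (by omega) hk
        exact ⟨2 * n + 1, by rw [hm21 n]; omega⟩
      · rw [hq43 a] at hk; exact absurd hk (by decide)
  have hrangeq : Set.range u = Set.range (fun n => m n + 1) := by
    ext k
    constructor
    · intro hk
      obtain ⟨n, hn⟩ := bwd k ((hrange k).mpr hk)
      exact ⟨n, hn.symm⟩
    · rintro ⟨n, rfl⟩
      exact (hrange _).mp (fwd n)
  exact strictMono_range_eq hmono (fun a b hab => by simpa using mmono hab) hrangeq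
end

section
/- Let (u_n) satisfy u_0 = 1, u_{2n} = 4u_n - 3, u_{2n+1} = 4u_n - 2. Then {u_{n+1} - u_n : n ∈ ℕ} = {(1 + 2·4^k)/3 : k ∈ ℕ}; moreover, u_{n+1} - u_n = (1 + 2·4^k)/3 if and only if n = (2m+1)·2^k - 1 for some m ∈ ℕ. -/
lemma val_odd (m : ℕ) : padicValNat 2 (2 * m + 1) = 0 :=
  padicValNat.eq_zero_of_not_dvd (by omega)

lemma val_two_mul (m : ℕ) (hm : m ≠ 0) : padicValNat 2 (2 * m) = padicValNat 2 m + 1 := by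
  haveI : Fact (Nat.Prime 2) := ⟨Nat.prime_two⟩
  rw [padicValNat.mul (by norm_num) hm, padicValNat.self (by norm_num)]
  omega

lemma key (u : ℕ → ℤ)
    (h2 : ∀ n, u (2 * n) = 4 * u n - 3) (h21 : ∀ n, u (2 * n + 1) = 4 * u n - 2) :
    ∀ n, 3 * (u (n + 1) - u n) = 1 + 2 * 4 ^ (padicValNat 2 (n + 1)) := by
  intro n
  induction n using Nat.strong_induction_on with
  | _ n ih =>
    rcases Nat.even_or_odd n with ⟨m, hm⟩ | ⟨m, hm⟩
    · subst hm
      have h1 := h2 m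
      have h2' := h21 m
      have : (2 : ℕ) * m + 1 = 2 * m + 1 := rfl
      rw [show m + m = 2 * m by ring, val_odd m, h21 m, h2 m]
      ring
    · subst hm
      have ihm := ih m (by omega)
      have e1 : 2 * m + 1 + 1 = 2 * (m + 1) := by ring
      rw [e1, h2 (m + 1), h21 m, val_two_mul (m + 1) (by omega)]
      rw [pow_succ]
      linarith [ihm]

lemma exists_repr (n k : ℕ) :
    padicValNat 2 (n + 1) = k ↔ ∃ m : ℕ, n + 1 = (2 * m + 1) * 2 ^ k := by
  haveI : Fact (Nat.Prime 2) := ⟨Nat.prime_two⟩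
  constructor
  · intro hk
    have hne : n + 1 ≠ 0 := by omega
    have hd : 2 ^ k ∣ n + 1 := hk ▸ pow_padicValNat_dvd
    obtain ⟨c, hc⟩ := hd
    have hc0 : c ≠ 0 := by rintro rfl; simp at hc
    have hcodd : ¬ 2 ∣ c := by
      rintro ⟨d, hd⟩
      have : 2 ^ (k + 1) ∣ n + 1 := ⟨d, by rw [hc, hd]; ring⟩
      exact pow_succ_padicValNat_not_dvd hne (hk ▸ this)
    refine ⟨c / 2, ?_⟩
    have : 2 * (c / 2) + 1 = c := by omega
    rw [this, hc]; ring_nf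
  · rintro ⟨m, hm⟩
    rw [hm, padicValNat.mul (by omega) (by positivity), val_odd,
      padicValNat.prime_pow]
    omega

/-- Let `(u n)` satisfy `u 0 = 1`, `u (2n) = 4 u n - 3`, `u (2n+1) = 4 u n - 2`. Then
the set of differences `u (n+1) - u n` is exactly `{(1 + 2·4^k)/3 : k ∈ ℕ}`; moreover
`u (n+1) - u n = (1 + 2·4^k)/3` iff `n = (2m+1)·2^k - 1` for some `m ∈ ℕ`. -/
theorem uSeq_consecutive_differences
    (u : ℕ → ℤ) (h0 : u 0 = 1)
    (h2 : ∀ n, u (2 * n) = 4 * u n - 3) (h21 : ∀ n, u (2 * n + 1) = 4 * u n - 2) :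
    ({d : ℤ | ∃ n : ℕ, u (n + 1) - u n = d} = {d : ℤ | ∃ k : ℕ, 3 * d = 1 + 2 * 4 ^ k}) ∧
      ∀ n k : ℕ, 3 * (u (n + 1) - u n) = 1 + 2 * 4 ^ k ↔
        ∃ m : ℕ, n + 1 = (2 * m + 1) * 2 ^ k := by
  have hkey := key u h2 h21
  have hiff : ∀ n k : ℕ, 3 * (u (n + 1) - u n) = 1 + 2 * 4 ^ k ↔
      ∃ m : ℕ, n + 1 = (2 * m + 1) * 2 ^ k := by
    intro n k
    rw [← exists_repr n k]
    constructor
    · intro h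
      have h2' := hkey n
      have h4 : (4 : ℤ) ^ (padicValNat 2 (n + 1)) = 4 ^ k := by linarith
      have h4n : (4 : ℕ) ^ (padicValNat 2 (n + 1)) = 4 ^ k := by exact_mod_cast h4
      exact Nat.pow_right_injective (by norm_num) h4n
    · rintro rfl
      exact hkey n
  refine ⟨?_, hiff⟩
  ext d
  simp only [Set.mem_setOf_eq]
  constructor
  · rintro ⟨n, rfl⟩
    exact ⟨padicValNat 2 (n + 1), hkey n⟩
  · rintro ⟨k, hk⟩
    refine ⟨2 ^ k - 1, ?_⟩
    have h1 : 2 ^ k - 1 + 1 = (2 * 0 + 1) * 2 ^ k := by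
      have : 1 ≤ 2 ^ k := Nat.one_le_two_pow
      omega
    have := (hiff (2 ^ k - 1) k).mpr ⟨0, h1⟩
    linarith
end

section
/- Let (a_n) satisfy a_0 = 0, a_1 = 1, a_2 = 2, a_3 = 7 and the recurrences a_{4n} = a_{4n-1} + 1, a_{4n+1} = a_{4n-1} + 2, a_{4n+2} = a_{4n-1} + 3, a_{8n+3} = a_{8n} + 7, a_{8n+7} = 4a_{4n+3} + 3 for n ≥ 1 (and n ≥ 0 where applicable). Then a_{2n} = 2m_n and a_{2n+1} = 2m_{n+1} - 1 for all n ∈ ℕ, where (m_n) is the Moser–de Bruijn sequence. -/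
/-- Let `(a n)` be the characteristic sequence (with `0` prepended) of `1`'s in the formal
inverse of the Thue–Morse sequence, satisfying the stated recurrences, and let `(m n)` be
the Moser–de Bruijn sequence. Then `a (2n) = 2 m n` and `a (2n+1) = 2 m (n+1) - 1`. -/
theorem aSeq_eq_two_mul_moserDeBruijn
    (a : ℕ → ℕ) (ha0 : a 0 = 0) (ha1 : a 1 = 1) (ha2 : a 2 = 2) (ha3 : a 3 = 7)
    (hr0 : ∀ n ≥ 1, a (4 * n) = a (4 * n - 1) + 1)
    (hr1 : ∀ n ≥ 1, a (4 * n + 1) = a (4 * n - 1) + 2)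
    (hr2 : ∀ n ≥ 1, a (4 * n + 2) = a (4 * n - 1) + 3)
    (hr3 : ∀ n : ℕ, a (8 * n + 3) = a (8 * n) + 7)
    (hr7 : ∀ n : ℕ, a (8 * n + 7) = 4 * a (4 * n + 3) + 3)
    (m : ℕ → ℕ) (hm0 : m 0 = 0)
    (hm2 : ∀ n, m (2 * n) = 4 * m n) (hm21 : ∀ n, m (2 * n + 1) = 4 * m n + 1) :
    ∀ n : ℕ, a (2 * n) = 2 * m n ∧ a (2 * n + 1) = 2 * m (n + 1) - 1 := by
  have hm1 : m 1 = 1 := by have := hm21 0; simp [hm0] at this; omega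
  have mpos : ∀ k, 1 ≤ k → 1 ≤ m k := by
    intro k
    induction k using Nat.strong_induction_on with
    | _ k ih =>
      intro hk
      rcases Nat.even_or_odd k with ⟨j, hj⟩ | ⟨j, hj⟩
      · have hjk : k = 2 * j := by omega
        subst hjk
        have h1 : 1 ≤ j := by omega
        have := ih j (by omega) h1
        have := hm2 j
        omega
      · subst hj
        have := hm21 j
        omega
  intro n
  induction n using Nat.strong_induction_on with
  | _ n ih =>
    match n, ih with
    | 0, _ => simp [ha0, ha1, hm0, hm1]
    | 1, _ =>
      have h2 : m 2 = 4 := by have := hm2 1; norm_num at this; omega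
      simp [ha2, ha3, hm1, h2]
    | (n + 2), ih =>
      rcases Nat.even_or_odd (n + 2) with ⟨k, hk⟩ | ⟨k, hk⟩
      · -- n + 2 = 2k, k ≥ 1
        have hk1 : 1 ≤ k := by omega
        have hIH := (ih (2 * k - 1) (by omega)).2
        have he : 2 * (2 * k - 1) + 1 = 4 * k - 1 := by omega
        have he2 : 2 * k - 1 + 1 = 2 * k := by omega
        rw [he, he2] at hIH
        have h0 := hr0 k hk1
        have h1 := hr1 k hk1
        have hp := mpos (2 * k) (by omega)
        have hm2k := hm2 k
        have hm2k1 := hm21 k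
        have hg : n + 2 = 2 * k := by omega
        rw [hg]
        constructor
        · rw [show 2 * (2 * k) = 4 * k by ring]; omega
        · rw [show 2 * (2 * k) + 1 = 4 * k + 1 by ring]; omega
      · -- n + 2 = 2k+1, k ≥ 1
        have hk1 : 1 ≤ k := by omega
        have hIH := (ih (2 * k - 1) (by omega)).2
        have he : 2 * (2 * k - 1) + 1 = 4 * k - 1 := by omega
        have he2 : 2 * k - 1 + 1 = 2 * k := by omega
        rw [he, he2] at hIH
        have h2 := hr2 k hk1
        have hp := mpos (2 * k) (by omega)
        have hm2k := hm2 k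
        have hm2k1 := hm21 k
        have hg : n + 2 = 2 * k + 1 := by omega
        rw [hg]
        refine ⟨by rw [show 2 * (2 * k + 1) = 4 * k + 2 by ring]; omega, ?_⟩
        rw [show 2 * (2 * k + 1) + 1 = 4 * k + 3 by ring,
            show 2 * k + 1 + 1 = 2 * (k + 1) by ring, hm2 (k + 1)]
        rcases Nat.even_or_odd k with ⟨j, hj⟩ | ⟨j, hj⟩
        · -- k = 2j, j ≥ 1
          have hjk : k = 2 * j := by omega
          have hj1 : 1 ≤ j := by omega
          have h3 := hr3 j
          have hIH2 := (ih (2 * (2 * j)) (by omega)).1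
          rw [show 2 * (2 * (2 * j)) = 8 * j by ring] at hIH2
          have hm4j := hm2 (2 * j)
          have hm2j := hm2 j
          have hmk1 := hm21 j
          rw [hjk, show 4 * (2 * j) + 3 = 8 * j + 3 by ring]
          omega
        · -- k = 2j+1
          subst hj
          have h7 := hr7 j
          have hIH2 := (ih (2 * j + 1) (by omega)).2
          rw [show 2 * (2 * j + 1) + 1 = 4 * j + 3 by ring] at hIH2
          have hmk1 : m (2 * j + 1 + 1) = 4 * m (j + 1) := by
            rw [show 2 * j + 1 + 1 = 2 * (j + 1) by ring, hm2]
          have hp2 := mpos (j + 1) (by omega)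
          have hm2j2 := hm2 (j + 1)
          rw [show 4 * (2 * j + 1) + 3 = 8 * j + 7 by ring]
          omega
end

section
/- Let (m_n^{(r)}) for r ≥ 2 be the increasing enumeration of natural numbers whose base-2^r expansion uses only digits 0 and 1 (equivalently m_0^{(r)} = 0, m_{2n}^{(r)} = 2^r m_n^{(r)}, m_{2n+1}^{(r)} = 2^r m_n^{(r)} + 1), and set u_n^{(r)} = m_n^{(r)} + 1. Then for all n ∈ ℕ, ((n+1)^r + 2^r - 2)/(2^r - 1) ≤ u_n^{(r)} ≤ n^r + 1; moreover u_{2^m - 1}^{(r)} = (2^{mr} + 2^r - 2)/(2^r - 1) and u_{2^m}^{(r)} = 2^{mr} + 1 for all m ∈ ℕ. -/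
private lemma aux2' (a : ℕ) (ha : 1 ≤ a) : ∀ r, 1 ≤ r → a ^ r + 1 ≤ (a + 1) ^ r := by
  intro r hr
  induction r, hr using Nat.le_induction with
  | base => simp
  | succ r hr ih =>
    have h : (a + 1) ^ (r + 1) = (a + 1) * (a + 1) ^ r := by ring
    have h2 : (a + 1) * (a ^ r + 1) ≤ (a + 1) * (a + 1) ^ r := Nat.mul_le_mul_left _ ih
    have h3 : 1 ≤ a ^ r := Nat.one_le_pow _ _ (by omega)
    nlinarith [pow_succ a r]

private lemma aux1' (a : ℕ) (ha : 3 ≤ a) : ∀ r, 2 ≤ r → a ^ r + 2 ^ r ≤ (a + 1) ^ r + 1 := by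
  intro r hr
  induction r, hr using Nat.le_induction with
  | base => nlinarith
  | succ r hr ih =>
    have h2 : (a + 1) * (a ^ r + 2 ^ r) ≤ (a + 1) * ((a + 1) ^ r + 1) :=
      Nat.mul_le_mul_left _ ih
    have h3 : a ≤ a ^ r := Nat.le_self_pow (by omega) a
    have h4 : 1 ≤ 2 ^ r := Nat.one_le_two_pow
    nlinarith [pow_succ a r, pow_succ (a+1) r, pow_succ 2 r]

/-- For `r ≥ 2`, let `(m n)` satisfy `m 0 = 0`, `m (2n) = 2^r · m n`,
`m (2n+1) = 2^r · m n + 1` (the increasing enumeration of numbers with only digits `0`, `1`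
in base `2^r`), and set `u n = m n + 1`. Then
`((n+1)^r + 2^r - 2)/(2^r - 1) ≤ u n ≤ n^r + 1` for all `n`, and
`u (2^m - 1) = (2^{mr} + 2^r - 2)/(2^r - 1)`, `u (2^m) = 2^{mr} + 1` for all `m`. -/
theorem uSeq_general_bounds
    (r : ℕ) (hr : 2 ≤ r)
    (m : ℕ → ℕ) (hm0 : m 0 = 0)
    (hm2 : ∀ n, m (2 * n) = 2 ^ r * m n) (hm21 : ∀ n, m (2 * n + 1) = 2 ^ r * m n + 1)
    (u : ℕ → ℕ) (hu : ∀ n, u n = m n + 1) :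
    (∀ n : ℕ, (((n + 1 : ℚ) ^ r + 2 ^ r - 2) / (2 ^ r - 1) ≤ (u n : ℚ)) ∧ u n ≤ n ^ r + 1) ∧
      ∀ k : ℕ, ((u (2 ^ k - 1) : ℚ) = ((2 : ℚ) ^ (k * r) + 2 ^ r - 2) / (2 ^ r - 1)) ∧
        u (2 ^ k) = 2 ^ (k * r) + 1 := by
  have hP4 : 4 ≤ 2 ^ r := by
    calc (4:ℕ) = 2 ^ 2 := by norm_num
    _ ≤ 2 ^ r := Nat.pow_le_pow_right (by norm_num) hr
  -- main natural-number induction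
  have main : ∀ n, ((n + 1) ^ r + m n ≤ 2 ^ r * m n + 1) ∧ m n ≤ n ^ r := by
    intro n
    induction n using Nat.strong_induction_on with
    | _ n ih =>
      rcases Nat.even_or_odd n with ⟨k, hk⟩ | ⟨k, hk⟩
      · -- n = 2k
        have hn : n = 2 * k := by omega
        rcases Nat.eq_zero_or_pos k with hk0 | hk1
        · subst hn; subst hk0; simp [hm0]
        · have hklt : k < n := by omega
          obtain ⟨ihA, ihB⟩ := ih k hklt
          subst hn
          constructor
          · -- A(2k): (2k+1)^r + 2^r * m k ≤ 2^r * (2^r * m k) + 1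
            rw [hm2]
            have haux : (2 * k + 1) ^ r + 2 ^ r ≤ (2 * k + 2) ^ r + 1 :=
              aux1' (2 * k + 1) (by omega) r hr
            have hsc : 2 ^ r * ((k + 1) ^ r + m k) ≤ 2 ^ r * (2 ^ r * m k + 1) :=
              Nat.mul_le_mul_left _ ihA
            have hY : (2 * k + 2) ^ r = 2 ^ r * (k + 1) ^ r := by
              rw [← Nat.mul_pow]; ring_nf
            have key : ∀ (P X Y M M2 : ℕ), X + P ≤ Y + 1 → Y + M ≤ M2 + P →
                X + M ≤ M2 + 1 := by intros; omega
            have hsc' : (2 * k + 2) ^ r + 2 ^ r * m k ≤ 2 ^ r * (2 ^ r * m k) + 2 ^ r := by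
              rw [hY]; nlinarith [hsc]
            exact key (2 ^ r) _ _ _ _ haux hsc'
          · rw [hm2]
            calc 2 ^ r * m k ≤ 2 ^ r * k ^ r := Nat.mul_le_mul_left _ ihB
            _ = (2 * k) ^ r := by rw [Nat.mul_pow]
      · -- n = 2k + 1
        have hn : n = 2 * k + 1 := by omega
        have hklt : k < n := by omega
        obtain ⟨ihA, ihB⟩ := ih k hklt
        subst hn
        constructor
        · rw [hm21]
          have hsc : 2 ^ r * ((k + 1) ^ r + m k) ≤ 2 ^ r * (2 ^ r * m k + 1) :=
            Nat.mul_le_mul_left _ ihA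
          have hY : (2 * k + 1 + 1) ^ r = 2 ^ r * (k + 1) ^ r := by
            rw [← Nat.mul_pow]; ring_nf
          rw [hY]; nlinarith [hsc]
        · rw [hm21]
          rcases Nat.eq_zero_or_pos k with hk0 | hk1
          · subst hk0; simp [hm0]
          · have haux : (2 * k) ^ r + 1 ≤ (2 * k + 1) ^ r :=
              aux2' (2 * k) (by omega) r (by omega)
            have : 2 ^ r * m k ≤ (2 * k) ^ r := by
              calc 2 ^ r * m k ≤ 2 ^ r * k ^ r := Nat.mul_le_mul_left _ ihB
              _ = (2 * k) ^ r := by rw [Nat.mul_pow]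
            omega
  -- special values, natural number versions
  have hpow : ∀ k, m (2 ^ k) = 2 ^ (k * r) := by
    intro k
    induction k with
    | zero =>
      have := hm21 0
      simpa [hm0] using this
    | succ k ih =>
      have h1 : (2:ℕ) ^ (k + 1) = 2 * 2 ^ k := by ring
      rw [h1, hm2, ih, ← pow_add]
      ring_nf
  have hpred : ∀ k, 2 ^ r * m (2 ^ k - 1) + 1 = 2 ^ (k * r) + m (2 ^ k - 1) := by
    intro k
    induction k with
    | zero => simp [hm0]
    | succ k ih =>
      have h1 : 1 ≤ (2:ℕ) ^ k := Nat.one_le_two_pow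
      have h2 : (2:ℕ) ^ (k + 1) - 1 = 2 * (2 ^ k - 1) + 1 := by
        have : (2:ℕ) ^ (k+1) = 2 * 2 ^ k := by ring
        omega
      rw [h2, hm21]
      have h3 : (2:ℕ) ^ ((k + 1) * r) = 2 ^ r * 2 ^ (k * r) := by
        rw [← pow_add]; ring_nf
      rw [h3]
      nlinarith [ih]
  have hQpos : (0:ℚ) < 2 ^ r - 1 := by
    have : (1:ℚ) < 2 ^ r := one_lt_pow₀ (by norm_num) (by omega)
    linarith
  constructor
  · intro n
    obtain ⟨hA, hB⟩ := main n
    constructor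
    · rw [hu, div_le_iff₀ hQpos]
      have hA' : ((n:ℚ) + 1) ^ r + (m n : ℚ) ≤ 2 ^ r * (m n : ℚ) + 1 := by
        exact_mod_cast hA
      push_cast
      nlinarith [hA']
    · rw [hu]; omega
  · intro k
    constructor
    · rw [hu, eq_div_iff (ne_of_gt hQpos)]
      have h := hpred k
      have h' : (2:ℚ) ^ r * (m (2 ^ k - 1) : ℚ) + 1 = 2 ^ (k * r) + (m (2 ^ k - 1) : ℚ) := by
        exact_mod_cast h
      push_cast
      nlinarith [h']
    · rw [hu, hpow]
end

section
/- Let r ≥ 2 and u_n^{(r)} = m_n^{(r)} + 1 where (m_n^{(r)}) satisfies m_0^{(r)} = 0, m_{2n}^{(r)} = 2^r m_n^{(r)}, m_{2n+1}^{(r)} = 2^r m_n^{(r)} + 1. Then liminf_{n→∞} u_n^{(r)}/n^r = 1/(2^r - 1) and limsup_{n→∞} u_n^{(r)}/n^r = 1. -/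
/-!
Writing `n = ∑ bᵢ 2ⁱ` in binary, the recursion gives `m n = ∑ bᵢ (2 ^ r)ⁱ`: `m` is the digit map
reading the binary digits of `n` in base `2 ^ r`.
Superadditivity of `x ↦ x ^ r` gives `m n ≤ n ^ r`, with equality at the powers of two, so
`u n / n ^ r ≤ 1 + n⁻ʳ` and the limsup `1` is attained along `2 ^ k`. Convexity of `x ↦ x ^ r`
gives `(n + 1) ^ r ≤ (2 ^ r - 1) m n + 1`, with equality at `n = 2 ^ k - 1`, so
`u n / n ^ r ≥ 1 / (2 ^ r - 1)` and the liminf is attained along `2 ^ k - 1`.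
-/

open Filter Topology

section LiminfLimsup

variable {α β γ : Type*} [ConditionallyCompleteLinearOrder α] [TopologicalSpace α] [OrderTopology α]
  {f h : β → α} {l : Filter β} {l' : Filter γ} [l'.NeBot] {φ : γ → β} {a : α}

theorem limsup_eq_of_le_of_tendsto_comp (hφ : Tendsto φ l' l) (hf : IsBoundedUnder (· ≥ ·) l f)
    (hfh : f ≤ᶠ[l] h) (hh : Tendsto h l (𝓝 a)) (hfφ : Tendsto (f ∘ φ) l' (𝓝 a)) :
    limsup f l = a := by
  have : l.NeBot := hφ.neBot
  refine le_antisymm ?_ ?_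
  · calc limsup f l ≤ limsup h l :=
          limsup_le_limsup hfh hf.isCoboundedUnder_le hh.isBoundedUnder_le
      _ = a := hh.limsup_eq
  · calc a = limsup (f ∘ φ) l' := hfφ.limsup_eq.symm
      _ ≤ limsup f l := hφ.limsup_comp_le_limsup
          ((hf.mono (map_mono hφ)).isCoboundedUnder_le) (hh.isBoundedUnder_le.mono_le hfh)

theorem liminf_eq_of_le_of_tendsto_comp (hφ : Tendsto φ l' l) (hf : IsBoundedUnder (· ≤ ·) l f)
    (hhf : h ≤ᶠ[l] f) (hh : Tendsto h l (𝓝 a)) (hfφ : Tendsto (f ∘ φ) l' (𝓝 a)) :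
    liminf f l = a :=
  limsup_eq_of_le_of_tendsto_comp (α := αᵒᵈ) hφ hf hhf hh hfφ

end LiminfLimsup

theorem add_one_div_le_one_add_inv {a x : ℝ} (ha : 0 ≤ a) (hax : a ≤ x) :
    (a + 1) / x ≤ 1 + x⁻¹ := by
  rw [add_div, one_div]
  gcongr
  exact div_le_one_of_le₀ hax (ha.trans hax)

theorem tendsto_one_add_inv_pow {r : ℕ} (hr : r ≠ 0) :
    Tendsto (fun x : ℝ => 1 + (x ^ r)⁻¹) atTop (𝓝 1) := by
  simpa using (tendsto_inv_atTop_zero.comp (tendsto_pow_atTop hr)).const_add (1 : ℝ)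

theorem tendsto_add_one_pow_add_div {r : ℕ} (hr : r ≠ 0) {D : ℝ} (hD : D ≠ 0) :
    Tendsto (fun x : ℝ => ((x + 1) ^ r + (D - 1)) / (D * x ^ r)) atTop (𝓝 (1 / D)) := by
  have hF : Continuous fun t : ℝ => D⁻¹ * ((1 + t) ^ r + (D - 1) * t ^ r) := by fun_prop
  have := (hF.tendsto 0).comp tendsto_inv_atTop_zero
  simp only [add_zero, zero_pow hr, mul_zero, one_pow, mul_one] at this
  rw [one_div]
  refine this.congr' ?_
  filter_upwards [eventually_ne_atTop 0] with x hx
  simp only [Function.comp_apply]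
  rw [inv_pow, show 1 + x⁻¹ = (x + 1) / x by field_simp, div_pow]
  field_simp

theorem one_le_two_pow_sub_one {r : ℕ} (hr : r ≠ 0) : (1 : ℝ) ≤ 2 ^ r - 1 := by
  have : (2 : ℝ) ≤ 2 ^ r := by exact_mod_cast Nat.le_self_pow hr 2
  linarith

theorem add_one_pow_add_pow_le_add_one_pow_add_pow {a b : ℕ} (hba : b ≤ a) (r : ℕ) :
    (b + 1) ^ r + a ^ r ≤ (a + 1) ^ r + b ^ r := by
  have binom (x : ℕ) : (x + 1) ^ r = ∑ i ∈ Finset.range r, x ^ i * r.choose i + x ^ r := by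
    rw [add_pow, Finset.sum_range_succ]; simp
  have : ∑ i ∈ Finset.range r, b ^ i * r.choose i ≤ ∑ i ∈ Finset.range r, a ^ i * r.choose i :=
    Finset.sum_le_sum fun i _ => Nat.mul_le_mul_right _ (Nat.pow_le_pow_left hba i)
  rw [binom, binom]
  omega

section DigitMap

variable {r : ℕ} {m : ℕ → ℕ}

theorem digitMap_le_pow (hr : r ≠ 0) (hm0 : m 0 = 0) (hm2 : ∀ n, m (2 * n) = 2 ^ r * m n)
    (hm21 : ∀ n, m (2 * n + 1) = 2 ^ r * m n + 1) (n : ℕ) : m n ≤ n ^ r := by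
  induction n using Nat.evenOddRec with
  | h0 => simp [hm0]
  | h_even n ih => rw [hm2, mul_pow]; exact Nat.mul_le_mul_left _ ih
  | h_odd n ih =>
    calc m (2 * n + 1) = 2 ^ r * m n + 1 := hm21 n
      _ ≤ (2 * n) ^ r + 1 ^ r := by rw [mul_pow, one_pow]; gcongr
      _ ≤ (2 * n + 1) ^ r := pow_add_pow_le (Nat.zero_le _) zero_le_one hr

theorem add_one_pow_le_digitMap (hm0 : m 0 = 0) (hm2 : ∀ n, m (2 * n) = 2 ^ r * m n)
    (hm21 : ∀ n, m (2 * n + 1) = 2 ^ r * m n + 1) (n : ℕ) :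
    (n + 1) ^ r ≤ (2 ^ r - 1) * m n + 1 := by
  induction n using Nat.evenOddRec with
  | h0 => simp [hm0]
  | h_even n ih =>
    -- the increment `(x + 1) ^ r - x ^ r` is at least `2 ^ r - 1` once `x ≥ 1`
    have shift := add_one_pow_add_pow_le_add_one_pow_add_pow (by omega : 1 ≤ 2 * n + 1) r
    have double : (2 * n + 1 + 1) ^ r ≤ 2 ^ r * ((2 ^ r - 1) * m n + 1) := by
      rw [show 2 * n + 1 + 1 = 2 * (n + 1) by ring, mul_pow]; gcongr
    rw [one_add_one_eq_two, one_pow] at shift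
    rw [hm2]
    linarith
  | h_odd n ih =>
    obtain ⟨D, hD⟩ : ∃ D, 2 ^ r = D + 1 := Nat.exists_eq_add_of_le' Nat.one_le_two_pow
    calc (2 * n + 1 + 1) ^ r = 2 ^ r * (n + 1) ^ r := by rw [← mul_pow]; ring
      _ ≤ 2 ^ r * ((2 ^ r - 1) * m n + 1) := by gcongr
      _ = (2 ^ r - 1) * m (2 * n + 1) + 1 := by rw [hm21, hD, Nat.add_sub_cancel]; ring

theorem digitMap_two_pow (hm0 : m 0 = 0) (hm2 : ∀ n, m (2 * n) = 2 ^ r * m n)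
    (hm21 : ∀ n, m (2 * n + 1) = 2 ^ r * m n + 1) (k : ℕ) : m (2 ^ k) = (2 ^ k) ^ r := by
  induction k with
  | zero => simpa [hm0] using hm21 0
  | succ k ih => rw [pow_succ', hm2, ih, mul_pow]

theorem digitMap_two_pow_sub_one (hm0 : m 0 = 0) (hm21 : ∀ n, m (2 * n + 1) = 2 ^ r * m n + 1)
    (k : ℕ) : (2 ^ r - 1) * m (2 ^ k - 1) + 1 = (2 ^ k) ^ r := by
  obtain ⟨D, hD⟩ : ∃ D, 2 ^ r = D + 1 := Nat.exists_eq_add_of_le' Nat.one_le_two_pow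
  induction k with
  | zero => simp [hm0]
  | succ k ih =>
    have : 2 ^ (k + 1) - 1 = 2 * (2 ^ k - 1) + 1 := by have := k.one_le_two_pow; omega
    rw [this, hm21, pow_succ', mul_pow, ← ih, hD, Nat.add_sub_cancel]
    ring

theorem one_div_le_digitMap_add_one_div_pow (hr : r ≠ 0) (hm0 : m 0 = 0)
    (hm2 : ∀ n, m (2 * n) = 2 ^ r * m n) (hm21 : ∀ n, m (2 * n + 1) = 2 ^ r * m n + 1)
    {n : ℕ} (hn : 1 ≤ n) :
    1 / (2 ^ r - 1 : ℝ) ≤ ((m n : ℝ) + 1) / (n : ℝ) ^ r := by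
  have hD := one_le_two_pow_sub_one hr
  have key := add_one_pow_le_digitMap hm0 hm2 hm21 n
  rw [← Nat.cast_le (α := ℝ)] at key
  push_cast [Nat.cast_sub Nat.one_le_two_pow] at key
  rw [div_le_div_iff₀ (by positivity) (by positivity), one_mul]
  calc (n : ℝ) ^ r ≤ ((n : ℝ) + 1) ^ r := by gcongr; linarith
    _ ≤ (2 ^ r - 1) * m n + 1 := key
    _ ≤ (m n + 1) * (2 ^ r - 1) := by linarith

theorem tendsto_digitMap_two_pow (hr : r ≠ 0) (hm0 : m 0 = 0)
    (hm2 : ∀ n, m (2 * n) = 2 ^ r * m n) (hm21 : ∀ n, m (2 * n + 1) = 2 ^ r * m n + 1) :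
    Tendsto (fun k => ((m (2 ^ k) : ℝ) + 1) / ((2 ^ k : ℕ) : ℝ) ^ r) atTop (𝓝 1) := by
  refine ((tendsto_one_add_inv_pow hr).comp (tendsto_natCast_atTop_atTop.comp
    (tendsto_pow_atTop_atTop_of_one_lt one_lt_two))).congr fun k => ?_
  simp only [Function.comp_apply]
  rw [digitMap_two_pow hm0 hm2 hm21]
  push_cast
  field_simp

theorem tendsto_digitMap_two_pow_sub_one (hr : r ≠ 0) (hm0 : m 0 = 0)
    (hm21 : ∀ n, m (2 * n + 1) = 2 ^ r * m n + 1) :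
    Tendsto (fun k => ((m (2 ^ k - 1) : ℝ) + 1) / ((2 ^ k - 1 : ℕ) : ℝ) ^ r) atTop
      (𝓝 (1 / (2 ^ r - 1))) := by
  have hD : (2 ^ r - 1 : ℝ) ≠ 0 := (zero_lt_one.trans_le (one_le_two_pow_sub_one hr)).ne'
  refine ((tendsto_add_one_pow_add_div hr hD).comp (tendsto_natCast_atTop_atTop.comp
    ((tendsto_sub_atTop_nat 1).comp (tendsto_pow_atTop_atTop_of_one_lt one_lt_two)))).congr
    fun k => ?_
  have key := digitMap_two_pow_sub_one hm0 hm21 k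
  set N := 2 ^ k - 1
  rw [show 2 ^ k = N + 1 by have := k.one_le_two_pow; omega] at key
  have key' := congrArg (Nat.cast : ℕ → ℝ) key
  push_cast [Nat.cast_sub Nat.one_le_two_pow] at key'
  simp only [Function.comp_apply]
  rw [← key']
  field_simp
  ring

end DigitMap

/-- For `r ≥ 2` and `u n = m n + 1`, where `m 0 = 0`, `m (2n) = 2^r · m n`,
`m (2n+1) = 2^r · m n + 1`, one has
`liminf u n / n^r = 1/(2^r - 1)` and `limsup u n / n^r = 1`. -/
theorem uSeq_general_liminf_limsup
    (r : ℕ) (hr : 2 ≤ r)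
    (m : ℕ → ℕ) (hm0 : m 0 = 0)
    (hm2 : ∀ n, m (2 * n) = 2 ^ r * m n) (hm21 : ∀ n, m (2 * n + 1) = 2 ^ r * m n + 1)
    (u : ℕ → ℕ) (hu : ∀ n, u n = m n + 1) :
    Filter.liminf (fun n : ℕ => (u n : ℝ) / (n : ℝ) ^ r) Filter.atTop = 1 / (2 ^ r - 1) ∧
      Filter.limsup (fun n : ℕ => (u n : ℝ) / (n : ℝ) ^ r) Filter.atTop = 1 := by
  have hr0 : r ≠ 0 := by omega
  simp only [hu, Nat.cast_add, Nat.cast_one]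
  have hle (n : ℕ) : ((m n : ℝ) + 1) / (n : ℝ) ^ r ≤ 1 + ((n : ℝ) ^ r)⁻¹ :=
    add_one_div_le_one_add_inv (Nat.cast_nonneg _)
      (by exact_mod_cast digitMap_le_pow hr0 hm0 hm2 hm21 n)
  have hlim : Tendsto (fun n : ℕ => 1 + ((n : ℝ) ^ r)⁻¹) atTop (𝓝 1) :=
    (tendsto_one_add_inv_pow hr0).comp tendsto_natCast_atTop_atTop
  have h2pow : Tendsto (fun k : ℕ => 2 ^ k) atTop atTop :=
    tendsto_pow_atTop_atTop_of_one_lt one_lt_two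
  constructor
  · refine liminf_eq_of_le_of_tendsto_comp ((tendsto_sub_atTop_nat 1).comp h2pow)
      (hlim.isBoundedUnder_le.mono_le (Eventually.of_forall hle)) ?_ tendsto_const_nhds
      (tendsto_digitMap_two_pow_sub_one hr0 hm0 hm21)
    filter_upwards [eventually_ge_atTop 1] with n hn
    exact one_div_le_digitMap_add_one_div_pow hr0 hm0 hm2 hm21 hn
  · exact limsup_eq_of_le_of_tendsto_comp h2pow (isBoundedUnder_of ⟨0, fun n => by positivity⟩)
      (Eventually.of_forall hle) hlim (tendsto_digitMap_two_pow hr0 hm0 hm2 hm21)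
end
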